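/- arXiv:2506.19060 — 4 statements merged into one kernel-verified Lean document; each statement's English description precedes it below -/
import Mathlib

section
/- Let m, n be positive integers and A an m×n real matrix. If A is not very well approximable, then for every ε > 0 there exists c > 0 such that for all sufficiently large Q and all γ ∈ ℝ^m, there exist q ∈ ℤ^n with ‖q‖ < Q and p ∈ ℤ^m satisfying ‖Aq − p − γ‖ < c·Q^{−(n/m − ε)}. -/
/-!
Dani correspondence: write `u_A (p, q) = (A q + p, q)` and `g_t = diag(e^{t/m}, e^{-t/n})`. If `A`
is not very well approximable then, for each `δ > 0`, the unimodular lattice `g_t u_A ℤ^{m+n}` has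
no nonzero vector of sup norm `< e^{-δt}` once `t` is large: such a vector is a solution of
`‖A q + p‖ ≤ ‖q‖^{-σ}` for some `σ > n/m`, there are only finitely many of those, and none has
`A q + p = 0`.

A unimodular lattice in `ℝ^k` with minimum `η ≤ 1` has covering radius `O(η^{-(k-1)})`: its vectors
of length `O(η^{-(k-1)})` span `ℝ^k`, since otherwise Minkowski's theorem in a thin slab around a
hyperplane containing them produces a lattice vector shorter than `η`; rounding coordinates in a
basis of such vectors then approximates every point. Covering `(e^{t/m} γ, 0)` by
`g_t u_A ℤ^{m+n}` and choosing `e^t` a suitable power of `Q` gives the exponent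
`(1/m - (m+n-1)δ) / (1/n + (m+n)δ)`, which tends to `n/m` as `δ → 0`.
-/

open MeasureTheory Module Submodule Set Filter Topology Real
open scoped ENNReal Matrix

theorem exists_mem_span_int_norm_sub_le {E : Type*} [NormedAddCommGroup E] [NormedSpace ℝ E]
    [FiniteDimensional ℝ E] {S : Set E} (hS : span ℝ S = ⊤) {R : ℝ} (hR : ∀ v ∈ S, ‖v‖ ≤ R)
    (y : E) : ∃ v ∈ span ℤ S, ‖y - v‖ ≤ finrank ℝ E * R / 2 := by
  obtain ⟨s, hsS, hspan, hind⟩ := exists_linearIndependent ℝ S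
  have : Fintype s := hind.setFinite.fintype
  let B : Basis s ℝ E := Basis.mk hind (by rw [Subtype.range_coe, hspan, hS])
  set c := B.repr y
  refine ⟨∑ i, round (c i) • (i : E), sum_mem fun i _ => zsmul_mem (subset_span (hsS i.2)) _, ?_⟩
  have hdiff : y - ∑ i, round (c i) • (i : E) = ∑ i, (c i - round (c i)) • (i : E) := by
    conv_lhs => rw [← B.sum_repr y]
    rw [← Finset.sum_sub_distrib]
    refine Finset.sum_congr rfl fun i _ => ?_
    rw [Basis.mk_apply, sub_smul, Int.cast_smul_eq_zsmul]
  calc ‖y - ∑ i, round (c i) • (i : E)‖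
      ≤ ∑ i : s, (1 / 2) * R := by
        rw [hdiff]
        refine (norm_sum_le _ _).trans (Finset.sum_le_sum fun i _ => ?_)
        rw [norm_smul, Real.norm_eq_abs]
        exact mul_le_mul (abs_sub_round _) (hR i (hsS i.2)) (norm_nonneg _) (by norm_num)
    _ = finrank ℝ E * R / 2 := by
        rw [Finset.sum_const, Finset.card_univ, nsmul_eq_mul, finrank_eq_card_basis B]
        ring

section GeometryOfNumbers

variable {ι : Type*} [DecidableEq ι]

def shear (ψ : (ι → ℝ) →ₗ[ℝ] ℝ) (i : ι) : (ι → ℝ) →ₗ[ℝ] ι → ℝ :=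
  LinearMap.pi (Function.update LinearMap.proj i ψ)

@[simp]
theorem shear_apply_self (ψ : (ι → ℝ) →ₗ[ℝ] ℝ) (i : ι) (x : ι → ℝ) : shear ψ i x i = ψ x := by
  simp [shear]

theorem shear_apply_of_ne (ψ : (ι → ℝ) →ₗ[ℝ] ℝ) {i j : ι} (h : j ≠ i) (x : ι → ℝ) :
    shear ψ i x j = x j := by
  simp [shear, h]

variable [Fintype ι]

theorem det_shear (ψ : (ι → ℝ) →ₗ[ℝ] ℝ) (i : ι) :
    LinearMap.det (shear ψ i) = ψ (Pi.single i 1) := by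
  have hmat : LinearMap.toMatrix' (shear ψ i) =
      (1 : Matrix ι ι ℝ).updateRow i fun j => ψ (Pi.single j 1) := by
    ext a b
    rcases eq_or_ne a i with rfl | h
    · simp
    · simp [h, shear_apply_of_ne _ h, Matrix.one_apply, Pi.single_apply]
  rw [← LinearMap.det_toMatrix', hmat, ← Matrix.det_transpose, ← Matrix.updateCol_transpose,
    Matrix.transpose_one, ← Matrix.cramer_apply, Matrix.cramer_one]
  rfl

theorem exists_ne_zero_mem_span_abs_apply_le (b : Basis ι ℝ (ι → ℝ))
    (hb : |(Matrix.of b).det| = 1) (T : (ι → ℝ) →ₗ[ℝ] ι → ℝ) (hT : |LinearMap.det T| = 1)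
    {r : ι → ℝ} (hr : ∀ j, 0 ≤ r j) (hr1 : 1 < ∏ j, r j) :
    ∃ x ∈ span ℤ (range b), x ≠ 0 ∧ ∀ j, |T x j| ≤ r j := by
  have hTdet : LinearMap.det T ≠ 0 := by intro h; simp [h] at hT
  have hvol : volume (T ⁻¹' Icc (-r) r) = ENNReal.ofReal (2 ^ Fintype.card ι * ∏ j, r j) := by
    rw [Measure.addHaar_preimage_linearMap _ hTdet, abs_inv, hT, inv_one, ENNReal.ofReal_one,
      one_mul, Real.volume_Icc_pi,
      ← ENNReal.ofReal_prod_of_nonneg fun j _ => by simp; linarith [hr j]]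
    simp [← two_mul, Finset.prod_mul_distrib]
  have hlt : volume (ZSpan.fundamentalDomain b) * 2 ^ finrank ℝ (ι → ℝ) <
      volume (T ⁻¹' Icc (-r) r) := by
    rw [ZSpan.volume_fundamentalDomain, hb, hvol, finrank_fintype_fun_eq_card,
      ENNReal.ofReal_one, one_mul, ← ENNReal.ofReal_ofNat, ← ENNReal.ofReal_pow (by norm_num),
      ENNReal.ofReal_lt_ofReal_iff (by positivity)]
    exact lt_mul_of_one_lt_right (by positivity) hr1
  have : Countable (span ℤ (range b)).toAddSubgroup :=
    inferInstanceAs (Countable (span ℤ (range b)))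
  obtain ⟨x, hx0, hx⟩ := exists_ne_zero_mem_lattice_of_measure_mul_two_pow_lt_measure
    (ZSpan.isAddFundamentalDomain' b volume)
    (fun x hx => by
      rw [mem_preimage, map_neg]
      exact ⟨neg_le_neg hx.2, by simpa using neg_le_neg hx.1⟩)
    ((convex_Icc _ _).linear_preimage T) hlt
  exact ⟨x, x.2, by simpa using hx0, fun j => abs_le.2 ⟨hx.1 j, hx.2 j⟩⟩

theorem exists_smul_apply_single_eq_one {φ : (ι → ℝ) →ₗ[ℝ] ℝ} (hφ : φ ≠ 0) :
    ∃ c : ℝ, ∃ i, (c • φ) (Pi.single i 1) = 1 ∧ ∀ j, |(c • φ) (Pi.single j 1)| ≤ 1 := by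
  have hne : (Finset.univ : Finset ι).Nonempty := by
    by_contra h
    exact hφ ((Pi.basisFun ℝ ι).ext fun j => absurd ⟨j, Finset.mem_univ j⟩ h)
  obtain ⟨i, -, hi⟩ := Finset.exists_max_image Finset.univ (fun j => |φ (Pi.single j 1)|) hne
  have hi0 : φ (Pi.single i 1) ≠ 0 := by
    intro h
    refine hφ ((Pi.basisFun ℝ ι).ext fun j => ?_)
    simpa [h] using hi j (Finset.mem_univ j)
  refine ⟨(φ (Pi.single i 1))⁻¹, i, inv_mul_cancel₀ hi0, fun j => ?_⟩
  rw [LinearMap.smul_apply, smul_eq_mul, abs_mul, abs_inv, inv_mul_le_one₀ (abs_pos.2 hi0)]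
  exact hi j (Finset.mem_univ j)

theorem abs_apply_sub_le {ψ : (ι → ℝ) →ₗ[ℝ] ℝ} {i : ι} (hi : ψ (Pi.single i 1) = 1)
    (hψ : ∀ j, |ψ (Pi.single j 1)| ≤ 1) {x : ι → ℝ} {β : ℝ} (hx : ∀ j ≠ i, |x j| ≤ β) :
    |x i - ψ x| ≤ (Fintype.card ι - 1) * β := by
  have hsum : ψ x = x i + ∑ j ∈ Finset.univ.erase i, x j * ψ (Pi.single j 1) := by
    conv_lhs => rw [pi_eq_sum_univ' x, map_sum]
    rw [← Finset.add_sum_erase _ _ (Finset.mem_univ i)]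
    simp [hi]
  calc |x i - ψ x| = |∑ j ∈ Finset.univ.erase i, x j * ψ (Pi.single j 1)| := by
        rw [hsum, sub_add_cancel_left, abs_neg]
    _ ≤ ∑ j ∈ Finset.univ.erase i, β := by
        refine (Finset.abs_sum_le_sum_abs _ _).trans (Finset.sum_le_sum fun j hj => ?_)
        rw [abs_mul]
        exact (mul_le_of_le_one_right (abs_nonneg _) (hψ j)).trans
          (hx j (Finset.ne_of_mem_erase hj))
    _ = (Fintype.card ι - 1) * β := by
        simp [Finset.card_erase_of_mem, Nat.cast_pred (Fintype.card_pos_iff.2 ⟨i⟩)]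

/-- If the short vectors lay in a hyperplane `ψ = 0`, Minkowski's theorem in the slab
`|ψ x| ≤ a`, `|x j| ≤ η / k` (`j ≠ i`), of volume `2 ^ k * 2`, would give a lattice vector short
enough to lie in that hyperplane, and then shorter than `η`. -/
theorem span_setOf_mem_span_norm_le_eq_top [Nonempty ι] (b : Basis ι ℝ (ι → ℝ))
    (hb : |(Matrix.of b).det| = 1) {η : ℝ} (hη : 0 < η) (hη1 : η ≤ 1)
    (hmin : ∀ v ∈ span ℤ (range b), v ≠ 0 → η ≤ ‖v‖) :
    span ℝ {v | v ∈ span ℤ (range b) ∧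
      ‖v‖ ≤ 3 * (Fintype.card ι / η) ^ (Fintype.card ι - 1)} = ⊤ := by
  set k := Fintype.card ι
  have hk : (1 : ℝ) ≤ k := by exact_mod_cast Fintype.card_pos
  set β := η / k
  have hβ : 0 < β := by positivity
  have hβη : β ≤ η := div_le_self hη.le hk
  have hkβ : (k - 1) * β = η - β := by simp only [β]; field_simp
  have hone : 1 ≤ (k / η) ^ (k - 1) := one_le_pow₀ ((one_le_div hη).2 (hη1.trans hk))
  set a := 2 * (k / η) ^ (k - 1)
  by_contra hspan
  obtain ⟨φ, hφ0, hφ⟩ := exists_le_ker_of_lt_top _ (lt_top_iff_ne_top.2 hspan)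
  obtain ⟨c, i, hi, hψ⟩ := exists_smul_apply_single_eq_one hφ0
  have hprod : 1 < ∏ j, Function.update (fun _ => β) i a j := by
    rw [Finset.prod_update_of_mem (Finset.mem_univ i)]
    simp only [Finset.prod_const, Finset.card_sdiff, Finset.inter_univ, Finset.card_singleton,
      Finset.card_univ, a, β]
    rw [mul_assoc, ← mul_pow, div_mul_div_comm, mul_comm η, div_self (by positivity), one_pow]
    norm_num
  obtain ⟨x, hxL, hx0, hx⟩ := exists_ne_zero_mem_span_abs_apply_le b hb (shear (c • φ) i)
    (by rw [det_shear, hi, abs_one]) (r := Function.update (fun _ => β) i a)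
    (fun j => by rcases eq_or_ne j i with rfl | h <;> simp [*, hβ.le, a]; positivity) hprod
  have hxj : ∀ j ≠ i, |x j| ≤ β := fun j hj => by simpa [shear_apply_of_ne _ hj, hj] using hx j
  have hxi : |x i - (c • φ) x| ≤ η - β := hkβ ▸ abs_apply_sub_le hi hψ hxj
  have hψx : |(c • φ) x| ≤ a := by simpa using hx i
  have hshort : ‖x‖ ≤ 3 * (k / η) ^ (k - 1) := by
    refine (pi_norm_le_iff_of_nonneg (by positivity)).2 fun j => ?_
    rw [Real.norm_eq_abs]
    rcases eq_or_ne j i with rfl | hj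
    · linarith [abs_sub_abs_le_abs_sub (x j) ((c • φ) x)]
    · linarith [hxj j hj]
  have hψ0 : (c • φ) x = 0 := by
    rw [LinearMap.smul_apply, hφ (subset_span ⟨hxL, hshort⟩), smul_zero]
  refine (hmin x hxL hx0).not_gt ((pi_norm_lt_iff hη).2 fun j => ?_)
  rw [Real.norm_eq_abs]
  rcases eq_or_ne j i with rfl | hj
  · rw [hψ0, sub_zero] at hxi
    linarith
  · have hk1 : (1 : ℝ) < k := by exact_mod_cast Fintype.one_lt_card_iff.2 ⟨j, i, hj⟩
    exact (hxj j hj).trans_lt (div_lt_self hη hk1)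

theorem exists_mem_span_norm_sub_le [Nonempty ι] (b : Basis ι ℝ (ι → ℝ))
    (hb : |(Matrix.of b).det| = 1) {η : ℝ} (hη : 0 < η) (hη1 : η ≤ 1)
    (hmin : ∀ v ∈ span ℤ (range b), v ≠ 0 → η ≤ ‖v‖) (y : ι → ℝ) :
    ∃ v ∈ span ℤ (range b),
      ‖y - v‖ ≤ 2 * Fintype.card ι ^ Fintype.card ι / η ^ (Fintype.card ι - 1) := by
  set k := Fintype.card ι
  obtain ⟨v, hv, hyv⟩ := exists_mem_span_int_norm_sub_le
    (span_setOf_mem_span_norm_le_eq_top b hb hη hη1 hmin) (fun v hv => hv.2) y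
  refine ⟨v, span_le.2 (fun w hw => hw.1) hv, hyv.trans ?_⟩
  have hk : (k : ℝ) * k ^ (k - 1) = k ^ k := mul_pow_sub_one Fintype.card_ne_zero _
  calc (finrank ℝ (ι → ℝ) : ℝ) * (3 * (k / η) ^ (k - 1)) / 2
      = 3 / 2 * (k ^ k / η ^ (k - 1)) := by
        rw [finrank_fintype_fun_eq_card, div_pow, ← hk]; ring
    _ ≤ 2 * k ^ k / η ^ (k - 1) := by
        rw [mul_div_assoc]; gcongr; norm_num

theorem exists_intCast_norm_sub_mulVec_le [Nonempty ι] (M : Matrix ι ι ℝ) (hM : |M.det| = 1)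
    {η : ℝ} (hη : 0 < η) (hη1 : η ≤ 1)
    (hmin : ∀ c : ι → ℤ, c ≠ 0 → η ≤ ‖M *ᵥ fun i => (c i : ℝ)‖) (y : ι → ℝ) :
    ∃ c : ι → ℤ, ‖y - M *ᵥ fun i => (c i : ℝ)‖ ≤
      2 * Fintype.card ι ^ Fintype.card ι / η ^ (Fintype.card ι - 1) := by
  have hdet : LinearMap.det (Matrix.toLin' M) ≠ 0 := by
    rw [LinearMap.det_toLin']; intro h; simp [h] at hM
  let b := (Pi.basisFun ℝ ι).map ((Matrix.toLin' M).equivOfDetNeZero hdet)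
  have hbM : ∀ i, b i = M.col i := fun i => by simp [b]
  have hb : |(Matrix.of b).det| = 1 := by
    rw [show Matrix.of b = M.transpose from Matrix.ext fun i j => by simp [hbM]]
    simpa using hM
  have hmem (v : ι → ℝ) :
      v ∈ span ℤ (range b) ↔ ∃ c : ι → ℤ, M *ᵥ (fun i => (c i : ℝ)) = v := by
    rw [mem_span_range_iff_exists_fun]
    have (c : ι → ℤ) : ∑ i, c i • b i = M *ᵥ (fun i => (c i : ℝ)) := by
      ext j
      simp [hbM, Matrix.mulVec, dotProduct, Finset.sum_apply, mul_comm]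
    simp only [this]
  have hmin' : ∀ v ∈ span ℤ (range b), v ≠ 0 → η ≤ ‖v‖ := by
    intro v hv hv0
    obtain ⟨c, rfl⟩ := (hmem v).1 hv
    exact hmin c (by rintro rfl; simp [← Pi.zero_def] at hv0)
  obtain ⟨v, hv, hyv⟩ := exists_mem_span_norm_sub_le b hb hη hη1 hmin' y
  obtain ⟨c, rfl⟩ := (hmem v).1 hv
  exact ⟨c, hyv⟩

end GeometryOfNumbers

section Diophantine

variable {ι κ : Type*} [Fintype ι] [Fintype κ]

theorem one_le_norm_intCast_of_ne_zero {v : ι → ℤ} (hv : v ≠ 0) :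
    1 ≤ ‖fun i => (v i : ℝ)‖ := by
  obtain ⟨i, hi⟩ := Function.ne_iff.1 hv
  calc (1 : ℝ) ≤ |(v i : ℝ)| := by exact_mod_cast Int.one_le_abs hi
    _ ≤ _ := norm_le_pi_norm (fun i => (v i : ℝ)) i

theorem norm_sum_elim {E : Type*} [SeminormedAddCommGroup E] (u : ι → E) (v : κ → E) :
    ‖Sum.elim u v‖ = max ‖u‖ ‖v‖ := by
  refine le_antisymm ((pi_norm_le_iff_of_nonneg (le_max_of_le_left (norm_nonneg _))).2 ?_)
    (max_le ((pi_norm_le_iff_of_nonneg (norm_nonneg _)).2 fun i => ?_)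
      ((pi_norm_le_iff_of_nonneg (norm_nonneg _)).2 fun j => ?_))
  · rintro (i | j)
    · exact (norm_le_pi_norm u i).trans (le_max_left _ _)
    · exact (norm_le_pi_norm v j).trans (le_max_right _ _)
  · exact norm_le_pi_norm (Sum.elim u v) (.inl i)
  · exact norm_le_pi_norm (Sum.elim u v) (.inr j)

/-- `A` is `σ`-very well approximable iff `approxSet A σ` is infinite. -/
def approxSet (A : Matrix ι κ ℝ) (σ : ℝ) : Set ((ι → ℤ) × (κ → ℤ)) :=
  {pq | ‖A *ᵥ (fun i => (pq.2 i : ℝ)) + (fun i => (pq.1 i : ℝ))‖ ≤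
    ‖(fun i => (pq.2 i : ℝ))‖ ^ (-σ)}

theorem mulVec_add_ne_zero_of_finite {A : Matrix ι κ ℝ} {σ : ℝ} (hfin : (approxSet A σ).Finite)
    (p : ι → ℤ) {q : κ → ℤ} (hq : q ≠ 0) :
    A *ᵥ (fun i => (q i : ℝ)) + (fun i => (p i : ℝ)) ≠ 0 := by
  intro h
  refine Set.infinite_of_injective_forall_mem (f := fun c : ℤ => c • (p, q))
    (smul_left_injective ℤ (by simp [hq])) (fun c => ?_) hfin
  have hcq : (fun i => ((c • q) i : ℝ)) = (c : ℝ) • fun i => (q i : ℝ) := by ext; simp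
  have hcp : (fun i => ((c • p) i : ℝ)) = (c : ℝ) • fun i => (p i : ℝ) := by ext; simp
  show ‖A *ᵥ (fun i => ((c • q) i : ℝ)) + (fun i => ((c • p) i : ℝ))‖ ≤ _
  rw [hcq, hcp, Matrix.mulVec_smul, ← smul_add, h, smul_zero, norm_zero]
  exact rpow_nonneg (norm_nonneg _) _

theorem eventually_forall_not_approx {A : Matrix ι κ ℝ} {σ : ℝ} (hσ : 0 < σ)
    (hfin : (approxSet A σ).Finite) :
    ∀ᶠ X in atTop, ∀ (p : ι → ℤ) (q : κ → ℤ), (p, q) ≠ 0 →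
      X ^ (-σ) ≤ ‖A *ᵥ (fun i => (q i : ℝ)) + (fun i => (p i : ℝ))‖ ∨
        X ≤ ‖(fun i => (q i : ℝ))‖ := by
  have hsep : ∀ s ∈ approxSet A σ \ {0}, ∀ᶠ X in atTop,
      X ^ (-σ) < ‖A *ᵥ (fun i => (s.2 i : ℝ)) + (fun i => (s.1 i : ℝ))‖ := by
    rintro ⟨p, q⟩ ⟨hs, hs0⟩
    have hq : q ≠ 0 := by
      rintro rfl
      have hp : p = 0 := by
        by_contra hp
        simp only [approxSet, mem_ofPred_eq, Pi.zero_apply, Int.cast_zero, ← Pi.zero_def,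
          Matrix.mulVec_zero, zero_add, norm_zero, zero_rpow (neg_ne_zero.2 hσ.ne')] at hs
        linarith [one_le_norm_intCast_of_ne_zero hp]
      exact hs0 (by simp [hp])
    exact (tendsto_rpow_neg_atTop hσ).eventually
      (gt_mem_nhds (norm_pos_iff.2 (mulVec_add_ne_zero_of_finite hfin p hq)))
  filter_upwards [hfin.sdiff.eventually_all.2 hsep, eventually_gt_atTop 1] with X hX hX1 p q hpq
  by_contra! h
  rcases eq_or_ne q 0 with rfl | hq
  · have hp : p ≠ 0 := by rintro rfl; exact hpq rfl
    simp only [Pi.zero_apply, Int.cast_zero, ← Pi.zero_def, Matrix.mulVec_zero, zero_add] at h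
    linarith [one_le_norm_intCast_of_ne_zero hp,
      rpow_lt_one_of_one_lt_of_neg hX1 (neg_lt_zero.2 hσ)]
  · have hmem : (p, q) ∈ approxSet A σ := h.1.le.trans <|
      rpow_le_rpow_of_nonpos (zero_lt_one.trans_le (one_le_norm_intCast_of_ne_zero hq)) h.2.le
        (neg_nonpos.2 hσ.le)
    exact (hX (p, q) ⟨hmem, hpq⟩).not_ge h.1.le

theorem exists_inhomogeneous_approx_of_forall_le [DecidableEq ι] [DecidableEq κ] [Nonempty ι]
    (A : Matrix ι κ ℝ) {a b η : ℝ} (ha : 0 < a) (hb : 0 < b)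
    (hab : a ^ Fintype.card ι * b ^ Fintype.card κ = 1) (hη : 0 < η) (hη1 : η ≤ 1)
    (hmin : ∀ (p : ι → ℤ) (q : κ → ℤ), (p, q) ≠ 0 →
      η ≤ a * ‖A *ᵥ (fun i => (q i : ℝ)) + (fun i => (p i : ℝ))‖ ∨
        η ≤ b * ‖(fun i => (q i : ℝ))‖)
    (γ : ι → ℝ) :
    ∃ q : κ → ℤ, ∃ p : ι → ℤ,
      a * ‖A *ᵥ (fun i => (q i : ℝ)) - (fun i => (p i : ℝ)) - γ‖ ≤
        2 * Fintype.card (ι ⊕ κ) ^ Fintype.card (ι ⊕ κ) / η ^ (Fintype.card (ι ⊕ κ) - 1) ∧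
      b * ‖(fun i => (q i : ℝ))‖ ≤
        2 * Fintype.card (ι ⊕ κ) ^ Fintype.card (ι ⊕ κ) / η ^ (Fintype.card (ι ⊕ κ) - 1) := by
  let M : Matrix (ι ⊕ κ) (ι ⊕ κ) ℝ := Matrix.fromBlocks (a • 1) (a • A) 0 (b • 1)
  have hM : |M.det| = 1 := by simp [M, Matrix.det_fromBlocks_zero₂₁, hab]
  have hMc (c : ι ⊕ κ → ℤ) : M *ᵥ (fun i => (c i : ℝ)) =
      Sum.elim (a • (A *ᵥ (fun j => (c (.inr j) : ℝ)) + (fun i => (c (.inl i) : ℝ))))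
        (b • fun j => (c (.inr j) : ℝ)) := by
    rw [show (fun i => (c i : ℝ)) =
        Sum.elim (fun i => (c (.inl i) : ℝ)) (fun j => (c (.inr j) : ℝ)) by ext (i | j) <;> rfl]
    simp [M, Matrix.fromBlocks_mulVec, Matrix.smul_mulVec, add_comm]
  have hminM : ∀ c : ι ⊕ κ → ℤ, c ≠ 0 → η ≤ ‖M *ᵥ fun i => (c i : ℝ)‖ := by
    intro c hc
    rw [hMc, norm_sum_elim, norm_smul, norm_smul, Real.norm_of_nonneg ha.le,
      Real.norm_of_nonneg hb.le, le_max_iff]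
    refine hmin _ _ fun h => hc (funext fun i => ?_)
    rcases i with i | j
    · exact congrFun (congrArg Prod.fst h) i
    · exact congrFun (congrArg Prod.snd h) j
  obtain ⟨c, hc⟩ := exists_intCast_norm_sub_mulVec_le M hM hη hη1 hminM (Sum.elim (a • γ) 0)
  rw [hMc, ← Sum.elim_sub_sub, norm_sum_elim, max_le_iff, zero_sub, norm_neg, norm_smul,
    Real.norm_of_nonneg hb.le, ← smul_sub, norm_smul, Real.norm_of_nonneg ha.le, ← norm_neg] at hc
  refine ⟨fun j => c (.inr j), fun i => -c (.inl i), le_of_eq_of_le ?_ hc.1, hc.2⟩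
  congr 2
  ext i
  simp

end Diophantine

section Dani

variable {m n : ℕ} {A : Matrix (Fin m) (Fin n) ℝ}

theorem eventually_forall_exp_neg_le (hA : ∀ σ > (n : ℝ) / m, (approxSet A σ).Finite)
    {δ : ℝ} (hδ : 0 < δ) (hδn : δ < 1 / n) :
    ∀ᶠ t in atTop, ∀ (p : Fin m → ℤ) (q : Fin n → ℤ), (p, q) ≠ 0 →
      exp (-δ * t) ≤ exp (t / m) * ‖A *ᵥ (fun i => (q i : ℝ)) + (fun i => (p i : ℝ))‖ ∨
        exp (-δ * t) ≤ exp (-(t / n)) * ‖(fun i => (q i : ℝ))‖ := by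
  have hn : (0 : ℝ) < n := Nat.cast_pos.2 <| Nat.pos_of_ne_zero fun h => by
    simp [h] at hδn
    linarith
  have hδn' : 0 < 1 / (n : ℝ) - δ := sub_pos.2 hδn
  set σ := (δ + 1 / m) / (1 / n - δ)
  have hσσ : (1 / n - δ) * σ = δ + 1 / m := mul_div_cancel₀ _ hδn'.ne'
  have hσ : (n : ℝ) / m < σ := by
    rw [lt_div_iff₀ hδn', show (n : ℝ) / m * (1 / n - δ) = 1 / m - n / m * δ by field_simp]
    have : 0 ≤ (n : ℝ) / m * δ := by positivity
    linarith
  have hX : Tendsto (fun t => exp ((1 / n - δ) * t)) atTop atTop :=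
    tendsto_exp_atTop.comp (tendsto_id.const_mul_atTop hδn')
  filter_upwards [hX.eventually (eventually_forall_not_approx (by positivity) (hA σ hσ))]
    with t ht p q hpq
  rw [← exp_mul] at ht
  refine (ht p q hpq).imp (fun h => ?_) (fun h => ?_)
  · calc exp (-δ * t) = exp (t / m) * exp ((1 / n - δ) * t * -σ) := by
          rw [← exp_add]; congr 1; linear_combination t * hσσ
      _ ≤ _ := by gcongr
  · calc exp (-δ * t) = exp (-(t / n)) * exp ((1 / n - δ) * t) := by
          rw [← exp_add]; congr 1; ring
      _ ≤ _ := by gcongr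

theorem eventually_forall_exists_approx_exp (hm : 0 < m)
    (hA : ∀ σ > (n : ℝ) / m, (approxSet A σ).Finite) {δ : ℝ} (hδ : 0 < δ) (hδn : δ < 1 / n) :
    ∀ᶠ u in atTop, ∀ γ : Fin m → ℝ, ∃ q : Fin n → ℤ, ∃ p : Fin m → ℤ,
      ‖(fun i => (q i : ℝ))‖ ≤ 2 * (m + n) ^ (m + n) * exp (((m + n - 1) * δ + 1 / n) * u) ∧
      ‖A *ᵥ (fun i => (q i : ℝ)) - (fun i => (p i : ℝ)) - γ‖ ≤
        2 * (m + n) ^ (m + n) * exp (((m + n - 1) * δ - 1 / m) * u) := by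
  have : Nonempty (Fin m) := ⟨⟨0, hm⟩⟩
  have hn : n ≠ 0 := by
    rintro rfl
    simp at hδn
    linarith
  have hab (u : ℝ) :
      exp (u / m) ^ Fintype.card (Fin m) * exp (-(u / n)) ^ Fintype.card (Fin n) = 1 := by
    rw [Fintype.card_fin, Fintype.card_fin, ← exp_nat_mul, ← exp_nat_mul, ← exp_add]
    field_simp
    simp
  filter_upwards [eventually_forall_exp_neg_le hA hδ hδn, eventually_ge_atTop 0] with u hD hu γ
  obtain ⟨q, p, h1, h2⟩ := exists_inhomogeneous_approx_of_forall_le A (exp_pos _) (exp_pos _)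
    (hab u) (exp_pos _) (exp_le_one_iff.2 (by nlinarith)) hD γ
  simp only [Fintype.card_sum, Fintype.card_fin] at h1 h2
  have hbound {a x : ℝ} (h : exp a * x ≤ 2 * ↑(m + n) ^ (m + n) / exp (-δ * u) ^ (m + n - 1)) :
      x ≤ 2 * (m + n) ^ (m + n) * exp ((m + n - 1) * δ * u - a) := by
    rw [← exp_nat_mul, div_eq_mul_inv, ← exp_neg] at h
    push_cast [Nat.cast_sub (by omega : 1 ≤ m + n)] at h
    rwa [exp_sub, mul_div_assoc', le_div_iff₀' (exp_pos a),
      show (m + n - 1 : ℝ) * δ * u = -((m + n - 1) * (-δ * u)) by ring]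
  exact ⟨q, p, (hbound h2).trans_eq (by ring_nf), (hbound h1).trans_eq (by ring_nf)⟩

noncomputable def inhomogeneousExponent (m n : ℕ) (δ : ℝ) : ℝ :=
  (1 / m - (m + n - 1) * δ) / (1 / n + (m + n) * δ)

theorem tendsto_inhomogeneousExponent (hn : 0 < n) :
    Tendsto (inhomogeneousExponent m n) (𝓝 0) (𝓝 (n / m)) := by
  have h0 : inhomogeneousExponent m n 0 = n / m := by
    simp only [inhomogeneousExponent, mul_zero, sub_zero, add_zero]
    field_simp
  rw [← h0]
  unfold inhomogeneousExponent
  exact ContinuousAt.tendsto (by fun_prop (disch := positivity))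

theorem eventually_forall_exists_approx_rpow (hm : 0 < m)
    (hA : ∀ σ > (n : ℝ) / m, (approxSet A σ).Finite) {δ : ℝ} (hδ : 0 < δ) (hδn : δ < 1 / n) :
    ∀ᶠ Q in atTop, ∀ γ : Fin m → ℝ, ∃ q : Fin n → ℤ, ‖(fun i => (q i : ℝ))‖ < Q ∧
      ∃ p : Fin m → ℤ, ‖A *ᵥ (fun i => (q i : ℝ)) - (fun i => (p i : ℝ)) - γ‖ ≤
        2 * (m + n) ^ (m + n) * Q ^ (-inhomogeneousExponent m n δ) := by
  set s : ℝ := 1 / n + (m + n) * δ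
  have hs : 0 < s := by positivity
  have hu : Tendsto (fun Q => log Q / s) atTop atTop := tendsto_log_atTop.atTop_div_const hs
  have hC : ∀ᶠ u in atTop, 2 * (m + n) ^ (m + n) < exp (δ * u) :=
    (tendsto_exp_atTop.comp (tendsto_id.const_mul_atTop hδ)).eventually_gt_atTop _
  filter_upwards [hu.eventually ((eventually_forall_exists_approx_exp hm hA hδ hδn).and hC),
    eventually_gt_atTop 0] with Q ⟨hE, hCQ⟩ hQ γ
  obtain ⟨q, p, hq, hp⟩ := hE γ
  refine ⟨q, hq.trans_lt ?_, p, hp.trans_eq ?_⟩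
  · have hQu : exp (s * (log Q / s)) = Q := by rw [mul_div_cancel₀ _ hs.ne', exp_log hQ]
    refine lt_of_lt_of_eq ?_ hQu
    rw [show s * (log Q / s) = ((m + n - 1) * δ + 1 / n) * (log Q / s) + δ * (log Q / s) by ring,
      exp_add, mul_comm _ (exp _)]
    exact mul_lt_mul_of_pos_left hCQ (exp_pos _)
  · rw [rpow_def_of_pos hQ, inhomogeneousExponent]
    congr 2
    field_simp
    ring

end Dani

/-- If an `m × n` real matrix `A` is not very well approximable, then for
every `ε > 0` there exists `c > 0` such that for all sufficiently large `Q` and all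
`γ ∈ ℝ^m`, there exist `q ∈ ℤ^n` with `‖q‖ < Q` and `p ∈ ℤ^m` satisfying
`‖A q - p - γ‖ < c * Q ^ (-(n/m - ε))`. -/
theorem not_VWA_implies_inhomogeneous
    (m n : ℕ) (hm : 0 < m) (hn : 0 < n) (A : Matrix (Fin m) (Fin n) ℝ)
    (hA : ¬ ∃ σ : ℝ, σ > (n : ℝ) / m ∧
      {pq : (Fin m → ℤ) × (Fin n → ℤ) |
        ‖A.mulVec (fun i => (pq.2 i : ℝ)) + (fun i => (pq.1 i : ℝ))‖ ≤
          ‖(fun i => (pq.2 i : ℝ))‖ ^ (-σ)}.Infinite) :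
    ∀ ε > (0 : ℝ), ∃ c > (0 : ℝ), ∃ Q₀ : ℝ, ∀ Q ≥ Q₀, ∀ γ : Fin m → ℝ,
      ∃ q : Fin n → ℤ, ‖(fun i => (q i : ℝ))‖ < Q ∧
      ∃ p : Fin m → ℤ,
        ‖A.mulVec (fun i => (q i : ℝ)) - (fun i => (p i : ℝ)) - γ‖ <
          c * Q ^ (-((n : ℝ) / m - ε)) := by
  intro ε hε
  have hfin (σ : ℝ) (hσ : σ > (n : ℝ) / m) : (approxSet A σ).Finite :=
    Set.not_infinite.1 fun h => hA ⟨σ, hσ, h⟩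
  have hδ : ∀ᶠ δ in 𝓝[>] 0, (n : ℝ) / m - ε < inhomogeneousExponent m n δ ∧ δ < 1 / n :=
    nhdsWithin_le_nhds (((tendsto_inhomogeneousExponent hn).eventually
      (lt_mem_nhds (sub_lt_self _ hε))).and (eventually_lt_nhds (by positivity)))
  obtain ⟨δ, ⟨hexp, hδn⟩, hδ⟩ := (hδ.and self_mem_nhdsWithin).exists
  refine ⟨2 * (m + n) ^ (m + n) + 1, by positivity, eventually_atTop.1 ?_⟩
  filter_upwards [eventually_forall_exists_approx_rpow hm hfin hδ hδn, eventually_ge_atTop 1]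
    with Q hQ hQ1 γ
  obtain ⟨q, hq, p, hp⟩ := hQ γ
  refine ⟨q, hq, p, hp.trans_lt ?_⟩
  calc _ ≤ 2 * (m + n) ^ (m + n) * Q ^ (-((n : ℝ) / m - ε)) := by gcongr
    _ < _ := by gcongr; linarith
end

section
/- Let m, n be positive integers and A an m×n real matrix. Suppose that for every ε > 0 there exists c > 0 such that for all sufficiently large Q and all γ ∈ ℝ^m there exist q ∈ ℤ^n with ‖q‖ < Q and p ∈ ℤ^m satisfying ‖Aq − p − γ‖ < c·Q^{−(n/m − ε)}. Then A is not very well approximable. -/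
set_option maxHeartbeats 2000000
open MeasureTheory
open scoped ENNReal

lemma coord_abs_le_norm {k : ℕ} (x : Fin k → ℝ) (i : Fin k) : |x i| ≤ ‖x‖ := by
  rw [← Real.norm_eq_abs]; exact norm_le_pi_norm x i

lemma mulVec_norm_le (m n : ℕ) (A : Matrix (Fin m) (Fin n) ℝ) (x : Fin n → ℝ) :
    ‖A.mulVec x‖ ≤ (∑ i, ∑ j, |A i j|) * ‖x‖ := by
  rw [pi_norm_le_iff_of_nonneg (by positivity)]
  intro i
  rw [Real.norm_eq_abs]
  calc |A.mulVec x i| = |∑ j, A i j * x j| := by rw [Matrix.mulVec, dotProduct]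
    _ ≤ ∑ j, |A i j * x j| := Finset.abs_sum_le_sum_abs _ _
    _ ≤ ∑ j, |A i j| * ‖x‖ := by
        apply Finset.sum_le_sum
        intro j _
        rw [abs_mul]
        exact mul_le_mul_of_nonneg_left (coord_abs_le_norm x j) (abs_nonneg _)
    _ = (∑ j, |A i j|) * ‖x‖ := by rw [← Finset.sum_mul]
    _ ≤ (∑ i, ∑ j, |A i j|) * ‖x‖ := by
        apply mul_le_mul_of_nonneg_right _ (norm_nonneg _)
        exact Finset.single_le_sum (f := fun i => ∑ j, |A i j|) (fun i _ => by positivity)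
          (Finset.mem_univ i)

lemma exists_large_elt (m n : ℕ) (hm : 0 < m) (hn : 0 < n)
    (A : Matrix (Fin m) (Fin n) ℝ) (σ : ℝ) (hσ : 0 < σ)
    (hinf : {pq : (Fin m → ℤ) × (Fin n → ℤ) |
        ‖A.mulVec (fun i => (pq.2 i : ℝ)) + (fun i => (pq.1 i : ℝ))‖ ≤
          ‖(fun i => (pq.2 i : ℝ))‖ ^ (-σ)}.Infinite) (B : ℝ) :
    ∃ pq : (Fin m → ℤ) × (Fin n → ℤ),
      ‖A.mulVec (fun i => (pq.2 i : ℝ)) + (fun i => (pq.1 i : ℝ))‖ ≤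
          ‖(fun i => (pq.2 i : ℝ))‖ ^ (-σ) ∧ B < ‖(fun i => (pq.2 i : ℝ))‖ := by
  by_contra hc
  push_neg at hc
  apply hinf
  set CA := (∑ i, ∑ j, |A i j|) with hCA
  have hCA0 : 0 ≤ CA := by positivity
  set Pb : ℤ := ⌊1 + CA * B⌋ with hPb
  set Qb : ℤ := ⌊B⌋ with hQb
  apply Set.Finite.subset (Set.Finite.prod (Set.finite_Icc (fun _ : Fin m => -Pb) (fun _ => Pb))
    (Set.finite_Icc (fun _ : Fin n => -Qb) (fun _ => Qb)))
  rintro ⟨p, q⟩ hpq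
  simp only [Set.mem_setOf_eq] at hpq
  have hqB : ‖(fun i => (q i : ℝ))‖ ≤ B := hc (p, q) hpq
  have hrpow : ‖(fun i => (q i : ℝ))‖ ^ (-σ) ≤ 1 := by
    rcases eq_or_lt_of_le (norm_nonneg (fun i => (q i : ℝ))) with h0 | h0
    · rw [← h0, Real.zero_rpow (by linarith)]; norm_num
    · have hne : ¬ ∀ i, q i = 0 := by
        intro hall
        have : (fun i => (q i : ℝ)) = 0 := by funext i; simp [hall i]
        rw [this, norm_zero] at h0; exact lt_irrefl _ h0
      push_neg at hne
      obtain ⟨j, hj⟩ := hne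
      have h1 : (1:ℝ) ≤ ‖(fun i => (q i : ℝ))‖ := by
        calc (1:ℝ) ≤ |(q j : ℝ)| := by
              rw [← Int.cast_abs]; exact_mod_cast Int.one_le_abs hj
          _ ≤ _ := coord_abs_le_norm (fun i => (q i : ℝ)) j
      exact Real.rpow_le_one_of_one_le_of_nonpos h1 (by linarith)
  have hp : ∀ i, |(p i : ℝ)| ≤ 1 + CA * B := by
    intro i
    have h1 : |(p i : ℝ)| ≤ ‖(fun i => (p i : ℝ))‖ := coord_abs_le_norm (fun i => ((p i : ℝ))) i
    have h2 := norm_sub_le (A.mulVec (fun i => (q i : ℝ)) + (fun i => (p i : ℝ)))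
      (A.mulVec (fun i => (q i : ℝ)))
    simp only [add_sub_cancel_left] at h2
    have h3 : ‖A.mulVec (fun i => (q i : ℝ))‖ ≤ CA * B := by
      calc ‖A.mulVec (fun i => (q i : ℝ))‖ ≤ CA * ‖(fun i => (q i : ℝ))‖ :=
            mulVec_norm_le m n A _
        _ ≤ CA * B := mul_le_mul_of_nonneg_left hqB hCA0
    linarith
  constructor
  · simp only [Set.mem_Icc, Pi.le_def]
    constructor <;> intro i
    · have h5 : -p i ≤ ⌊1 + CA * B⌋ := Int.le_floor.mpr (by push_cast; linarith [(abs_le.mp (hp i)).1])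
      rw [hPb]; omega
    · rw [hPb]
      exact Int.le_floor.mpr (by exact_mod_cast (abs_le.mp (hp i)).2)
  · simp only [Set.mem_Icc, Pi.le_def]
    have hq : ∀ i, |(q i : ℝ)| ≤ B := fun i => le_trans (coord_abs_le_norm (fun i => ((q i : ℝ))) i) hqB
    constructor <;> intro i
    · have h5 : -q i ≤ ⌊B⌋ := Int.le_floor.mpr (by push_cast; linarith [(abs_le.mp (hq i)).1])
      rw [hQb]; omega
    · rw [hQb]; exact Int.le_floor.mpr (by exact_mod_cast (abs_le.mp (hq i)).2)


lemma oneDim_bad (f ρ : ℝ) (h2 : ρ ≤ 1/2) :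
    volume {t : ℝ | t ∈ Set.Icc (0:ℝ) 1 ∧ ∃ p : ℤ, |f - p - t| ≤ ρ}
      ≤ ENNReal.ofReal (6 * ρ) := by
  set P : Finset ℤ := Finset.Icc ⌈f - 1 - ρ⌉ ⌊f + ρ⌋ with hP
  have hsub : {t : ℝ | t ∈ Set.Icc (0:ℝ) 1 ∧ ∃ p : ℤ, |f - p - t| ≤ ρ}
      ⊆ ⋃ p ∈ P, Set.Icc (f - p - ρ) (f - p + ρ) := by
    rintro t ⟨⟨ht0, ht1⟩, p, hp⟩
    have h1 := abs_le.mp hp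
    have hpP : p ∈ P := by
      rw [hP, Finset.mem_Icc]
      constructor
      · apply Int.ceil_le.mpr; push_cast; linarith [h1.2]
      · apply Int.le_floor.mpr; push_cast; linarith [h1.1]
    exact Set.mem_biUnion hpP (by constructor <;> linarith [h1.1, h1.2])
  calc volume {t : ℝ | t ∈ Set.Icc (0:ℝ) 1 ∧ ∃ p : ℤ, |f - p - t| ≤ ρ}
      ≤ volume (⋃ p ∈ P, Set.Icc (f - p - ρ) (f - p + ρ)) := measure_mono hsub
    _ ≤ ∑ p ∈ P, volume (Set.Icc (f - p - ρ) (f - p + ρ)) := measure_biUnion_finset_le P _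
    _ = ∑ _p ∈ P, ENNReal.ofReal (2 * ρ) := by
        apply Finset.sum_congr rfl; intro p _; rw [Real.volume_Icc]; ring_nf
    _ = (P.card : ℝ≥0∞) * ENNReal.ofReal (2 * ρ) := by
        rw [Finset.sum_const, nsmul_eq_mul]
    _ ≤ 3 * ENNReal.ofReal (2 * ρ) := by
        gcongr
        have hcard : P.card ≤ 3 := by
          rw [hP, Int.card_Icc]
          have h1 : (⌊f + ρ⌋ : ℝ) ≤ f + ρ := Int.floor_le _
          have h2' : (f - 1 - ρ : ℝ) ≤ ⌈f - 1 - ρ⌉ := Int.le_ceil _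
          have h3 : ⌊f + ρ⌋ + 1 - ⌈f - 1 - ρ⌉ ≤ 3 := by
            have : ((⌊f + ρ⌋ + 1 - ⌈f - 1 - ρ⌉ : ℤ) : ℝ) ≤ 3 := by push_cast; linarith
            exact_mod_cast this
          omega
        exact_mod_cast hcard
    _ = ENNReal.ofReal (6 * ρ) := by
        rw [show (3:ℝ≥0∞) = ENNReal.ofReal 3 by norm_num, ← ENNReal.ofReal_mul (by norm_num)]
        ring_nf

lemma exists_good_gamma (m : ℕ) {ι : Type*} (K : Finset ι) (w : ι → Fin m → ℝ)
    (ρ : ℝ) (h0 : 0 ≤ ρ) (h2 : ρ ≤ 1/2)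
    (hcard : (K.card : ℝ) * (6 * ρ) ^ m < 1) :
    ∃ γ : Fin m → ℝ, ∀ r ∈ K, ∀ p : Fin m → ℤ,
      ρ < ‖w r - (fun i => (p i : ℝ)) - γ‖ := by
  set box : Set (Fin m → ℝ) := Set.univ.pi (fun _ => Set.Icc (0:ℝ) 1) with hbox
  set Bad : ι → Set (Fin m → ℝ) := fun r =>
    Set.univ.pi (fun i => {t : ℝ | t ∈ Set.Icc (0:ℝ) 1 ∧ ∃ p : ℤ, |w r i - p - t| ≤ ρ})
    with hBad
  have hvbox : volume box = 1 := by
    rw [hbox, volume_pi_pi]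
    simp [Real.volume_Icc]
  have hvBad : volume (⋃ r ∈ K, Bad r) < 1 := by
    calc volume (⋃ r ∈ K, Bad r) ≤ ∑ r ∈ K, volume (Bad r) := measure_biUnion_finset_le K _
      _ ≤ ∑ _r ∈ K, ENNReal.ofReal ((6 * ρ) ^ m) := by
          apply Finset.sum_le_sum
          intro r _
          rw [hBad, volume_pi_pi]
          calc ∏ i, volume {t : ℝ | t ∈ Set.Icc (0:ℝ) 1 ∧ ∃ p : ℤ, |w r i - p - t| ≤ ρ}
              ≤ ∏ _i : Fin m, ENNReal.ofReal (6 * ρ) :=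
                Finset.prod_le_prod' (fun i _ => oneDim_bad (w r i) ρ h2)
            _ = ENNReal.ofReal ((6 * ρ) ^ m) := by
                rw [Finset.prod_const, ENNReal.ofReal_pow (by linarith)]
                simp
      _ = (K.card : ℝ≥0∞) * ENNReal.ofReal ((6 * ρ) ^ m) := by
          rw [Finset.sum_const, nsmul_eq_mul]
      _ = ENNReal.ofReal ((K.card : ℝ) * (6 * ρ) ^ m) := by
          rw [ENNReal.ofReal_mul (by positivity)]
          simp
      _ < 1 := by
          rw [show (1:ℝ≥0∞) = ENNReal.ofReal 1 by simp]
          exact ENNReal.ofReal_lt_ofReal_iff (by norm_num) |>.mpr hcard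
  have hne : ∃ γ, γ ∈ box \ ⋃ r ∈ K, Bad r := by
    by_contra hc
    push_neg at hc
    have hsub : box ⊆ ⋃ r ∈ K, Bad r := by
      intro γ hγ
      by_contra hγ2
      exact hc γ ⟨hγ, hγ2⟩
    have := measure_mono (μ := volume) hsub
    rw [hvbox] at this
    exact absurd (lt_of_le_of_lt this hvBad) (lt_irrefl _)
  obtain ⟨γ, hγbox, hγ⟩ := hne
  refine ⟨γ, fun r hr p => ?_⟩
  by_contra hle
  push_neg at hle
  apply hγ
  apply Set.mem_biUnion hr
  rw [hBad]
  intro i _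
  refine ⟨hγbox i (Set.mem_univ i), p i, ?_⟩
  calc |w r i - p i - γ i| = ‖(w r - (fun i => (p i : ℝ)) - γ) i‖ := by simp [Real.norm_eq_abs]
    _ ≤ ‖w r - (fun i => (p i : ℝ)) - γ‖ := norm_le_pi_norm _ i
    _ ≤ ρ := hle

lemma vwa_part2 (m n : ℕ) (hm : 0 < m) (hn : 0 < n) (A : Matrix (Fin m) (Fin n) ℝ)
    (σ d α ε β₀ e c Q₀ : ℝ) (hσ0 : 0 < σ) (hc : 0 < c) (hα1 : 1 ≤ α)
    (hβ₀0 : 0 < β₀) (hβ₀l : β₀ ≤ α*(d-ε)) (hβ₀r : β₀ ≤ σ+1-α)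
    (hee : e = α*((n:ℝ)-1) + 1 - (m:ℝ)*β₀) (he0 : e < 0)
    (hQfar : ∀ Q ≥ Q₀, ∀ γ : Fin m → ℝ,
      ∃ q : Fin n → ℤ, ‖(fun i => (q i : ℝ))‖ < Q ∧
      ∃ p : Fin m → ℤ,
        ‖A.mulVec (fun i => (q i : ℝ)) - (fun i => (p i : ℝ)) - γ‖ < c * Q ^ (-(d - ε)))
    (hinf : {pq : (Fin m → ℤ) × (Fin n → ℤ) |
        ‖A.mulVec (fun i => (pq.2 i : ℝ)) + (fun i => (pq.1 i : ℝ))‖ ≤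
          ‖(fun i => (pq.2 i : ℝ))‖ ^ (-σ)}.Infinite) : False := by
  have hα0 : (0:ℝ) < α := by linarith
  obtain ⟨C, hCdef⟩ : ∃ C : ℝ, C = 7^(n-1) * (6*(c+2))^m := ⟨_, rfl⟩
  have hC0 : 0 < C := by rw [hCdef]; positivity
  -- eventual conditions
  have hev : ∀ᶠ x in Filter.atTop, (1:ℝ) ≤ x ∧ Q₀ ≤ x^α ∧
      (c+2)*x^(-β₀) ≤ 1/2 ∧ C * x^e < 1 := by
    have t1 : Filter.Tendsto (fun x : ℝ => x^α) Filter.atTop Filter.atTop :=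
      tendsto_rpow_atTop hα0
    have t2 : Filter.Tendsto (fun x : ℝ => (c+2)*x^(-β₀)) Filter.atTop (nhds 0) := by
      have := (tendsto_rpow_neg_atTop hβ₀0).const_mul (c+2)
      simpa using this
    have t3 : Filter.Tendsto (fun x : ℝ => C * x^e) Filter.atTop (nhds 0) := by
      have h' : Filter.Tendsto (fun x : ℝ => x^e) Filter.atTop (nhds 0) := by
        have := tendsto_rpow_neg_atTop (show (0:ℝ) < -e by linarith)
        simpa using this
      have := h'.const_mul C
      simpa using this
    filter_upwards [Filter.eventually_ge_atTop (1:ℝ), t1.eventually_ge_atTop Q₀,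
      t2.eventually_le_const (show (0:ℝ) < 1/2 by norm_num),
      t3.eventually_lt_const (show (0:ℝ) < 1 by norm_num)] with x h1 h2 h3 h4
    exact ⟨h1, h2, h3, h4⟩
  obtain ⟨B, hB⟩ := Filter.eventually_atTop.mp hev
  obtain ⟨B', hB'def⟩ : ∃ B' : ℝ, B' = max B 1 := ⟨_, rfl⟩
  have hB'1 : 1 ≤ B' := by rw [hB'def]; exact le_max_right _ _
  have hB'B : B ≤ B' := by rw [hB'def]; exact le_max_left _ _
  obtain ⟨⟨p₀, q₀⟩, hS0, hlarge⟩ := exists_large_elt m n hm hn A σ hσ0 hinf B'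
  simp only at hS0 hlarge
  obtain ⟨p₁, q₁, j, hjmax, hlarge', hθbound⟩ :
      ∃ (p₁ : Fin m → ℤ) (q₁ : Fin n → ℤ) (j : Fin n),
        (∀ i, |q₁ i| ≤ q₁ j) ∧ B' < ((q₁ j : ℤ) : ℝ) ∧
        ‖A.mulVec (fun i => (q₁ i : ℝ)) + (fun i => (p₁ i : ℝ))‖ ≤ ((q₁ j : ℝ)) ^ (-σ) := by
    obtain ⟨j, -, hjm⟩ := Finset.exists_max_image Finset.univ (fun i => |q₀ i|)
      ⟨⟨0, hn⟩, Finset.mem_univ _⟩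
    have hjm' : ∀ i, |q₀ i| ≤ |q₀ j| := fun i => hjm i (Finset.mem_univ i)
    have hnorm : ‖(fun i => (q₀ i : ℝ))‖ = ((|q₀ j| : ℤ) : ℝ) := by
      apply le_antisymm
      · rw [pi_norm_le_iff_of_nonneg (by positivity)]
        intro i
        rw [Real.norm_eq_abs, ← Int.cast_abs]
        exact_mod_cast hjm' i
      · rw [Int.cast_abs]
        exact le_trans (le_of_eq (by simp)) (coord_abs_le_norm (fun i => ((q₀ i:ℝ))) j)
    rcases le_or_gt 0 (q₀ j) with hsgn | hsgn
    · refine ⟨p₀, q₀, j, ?_, ?_, ?_⟩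
      all_goals beta_reduce
      · intro i; exact le_trans (hjm' i) (le_of_eq (abs_of_nonneg hsgn))
      · rw [← abs_of_nonneg hsgn]; rw [hnorm] at hlarge; exact_mod_cast hlarge
      · rw [← abs_of_nonneg hsgn, ← hnorm]; exact hS0
    · refine ⟨fun i => -p₀ i, fun i => -q₀ i, j, ?_, ?_, ?_⟩
      all_goals beta_reduce
      · intro i
        simp only [abs_neg]
        rw [show -q₀ j = |q₀ j| by rw [abs_of_neg hsgn]] at *
        exact hjm' i
      · rw [show -q₀ j = |q₀ j| by rw [abs_of_neg hsgn]]
        rw [hnorm] at hlarge; exact_mod_cast hlarge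
      · rw [show -q₀ j = |q₀ j| by rw [abs_of_neg hsgn], ← hnorm]
        have hfq : (fun i => ((-q₀ i : ℤ) : ℝ)) = -(fun i => ((q₀ i : ℝ))) := by
          funext i; simp only [Pi.neg_apply]; push_cast; ring
        have hfp : (fun i => ((-p₀ i : ℤ) : ℝ)) = -(fun i => ((p₀ i : ℝ))) := by
          funext i; simp only [Pi.neg_apply]; push_cast; ring
        rw [hfq, hfp, Matrix.mulVec_neg]
        rw [show -A.mulVec (fun i => ((q₀ i:ℝ))) + -(fun i => ((p₀ i:ℝ))) =
          -(A.mulVec (fun i => ((q₀ i:ℝ))) + (fun i => ((p₀ i:ℝ)))) by ring]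
        rw [norm_neg]
        exact hS0
  clear hS0 hlarge
  set Nz : ℤ := q₁ j with hNzdef
  set Nr : ℝ := ((Nz : ℤ) : ℝ) with hNrdef
  have hNr1 : 1 < Nr := lt_of_le_of_lt hB'1 hlarge'
  have hNr1' : (1:ℝ) ≤ Nr := le_of_lt hNr1
  have hNr0 : (0:ℝ) < Nr := by linarith
  have hNz0 : 0 < Nz := by
    have h' := hNr0
    rw [hNrdef] at h'
    exact_mod_cast h'
  obtain ⟨hx1, hx2, hx3, hx4⟩ := hB Nr (le_trans hB'B (le_of_lt hlarge'))
  set Q : ℝ := Nr ^ α with hQdef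
  have hQ0 : 0 < Q := by rw [hQdef]; positivity
  have hQN : Nr ≤ Q := by
    rw [hQdef]
    calc Nr = Nr ^ (1:ℝ) := (Real.rpow_one Nr).symm
      _ ≤ Nr ^ α := Real.rpow_le_rpow_of_exponent_le hNr1' hα1
  have hQ1 : 1 ≤ Q := le_trans hNr1' hQN
  clear_value Q Nz Nr
  -- the radius
  set ρ : ℝ := c * Q ^ (-(d-ε)) + (Q+Nr)/Nr * Nr ^ (-σ) with hρdef
  have hρ0 : 0 ≤ ρ := by
    rw [hρdef]
    have h1 : (0:ℝ) ≤ c * Q ^ (-(d-ε)) := by positivity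
    have h2 : (0:ℝ) ≤ (Q+Nr)/Nr * Nr ^ (-σ) := by positivity
    linarith
  clear_value ρ
  have hρβ : ρ ≤ (c+2) * Nr ^ (-β₀) := by
    have e1 : Q ^ (-(d-ε)) ≤ Nr ^ (-β₀) := by
      rw [hQdef, ← Real.rpow_mul (le_of_lt hNr0),
        show α*(-(d-ε)) = -(α*(d-ε)) by ring]
      exact Real.rpow_le_rpow_of_exponent_le hNr1' (neg_le_neg hβ₀l)
    have e2 : (Q+Nr)/Nr * Nr ^ (-σ) ≤ 2 * Nr ^ (-β₀) := by
      have h21 : (Q+Nr)/Nr ≤ 2*Q/Nr := by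
        rw [div_le_div_iff₀ hNr0 hNr0]
        nlinarith [mul_nonneg (le_of_lt hNr0) (show (0:ℝ) ≤ Q - Nr by linarith)]
      have hQdivN : Q / Nr = Nr ^ (α-1) := by
        rw [hQdef, Real.rpow_sub hNr0, Real.rpow_one]
      calc (Q+Nr)/Nr * Nr ^ (-σ) ≤ (2*Q/Nr) * Nr ^ (-σ) :=
            mul_le_mul_of_nonneg_right h21 (Real.rpow_nonneg (le_of_lt hNr0) _)
        _ = 2 * (Nr ^ (α-1) * Nr ^ (-σ)) := by rw [mul_div_assoc, hQdivN]; ring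
        _ = 2 * Nr ^ (α-1+(-σ)) := by rw [Real.rpow_add hNr0]
        _ ≤ 2 * Nr ^ (-β₀) := by
            have := Real.rpow_le_rpow_of_exponent_le hNr1'
              (show α-1+(-σ) ≤ -β₀ by linarith)
            linarith
    calc ρ = c * Q ^ (-(d-ε)) + (Q+Nr)/Nr * Nr ^ (-σ) := hρdef
      _ ≤ c * Nr ^ (-β₀) + 2 * Nr ^ (-β₀) := by
          have := mul_le_mul_of_nonneg_left e1 (le_of_lt hc)
          linarith
      _ = (c+2) * Nr ^ (-β₀) := by ring
  have hρhalf : ρ ≤ 1/2 := le_trans hρβ hx3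
  -- residue box
  set Tb : ℤ := ⌊3*Q⌋ with hTbdef
  have hTble : (Tb:ℝ) ≤ 3*Q := Int.floor_le _
  have hTb0 : 0 ≤ Tb := by
    rw [hTbdef]; apply Int.le_floor.mpr; push_cast; linarith
  clear_value Tb
  classical
  set lo : Fin n → ℤ := fun i => if i = j then 0 else -Tb with hlodef
  set hi : Fin n → ℤ := fun i => if i = j then Nz - 1 else Tb with hhidef
  set K : Finset (Fin n → ℤ) := Finset.Icc lo hi with hKdef
  have hKcard : (K.card : ℝ) ≤ (7*Q)^(n-1) * Nr := by
    rw [hKdef, Pi.card_Icc]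
    push_cast
    calc (∏ i, ((Finset.Icc (lo i) (hi i)).card : ℝ))
        ≤ ∏ i, (if i = j then Nr else 7*Q) := by
          apply Finset.prod_le_prod
          · intro i _; positivity
          · intro i _
            by_cases hij : i = j
            · subst hij
              have hloj : lo i = 0 := by rw [hlodef]; simp
              have hhij : hi i = Nz - 1 := by rw [hhidef]; simp
              rw [if_pos rfl, hloj, hhij, Int.card_Icc,
                show Nz - 1 + 1 - 0 = Nz by ring]
              have hcast : ((Nz.toNat : ℤ) : ℝ) = Nr := by
                rw [Int.toNat_of_nonneg (le_of_lt hNz0), hNrdef]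
              exact_mod_cast hcast.le
            · have hloi : lo i = -Tb := by rw [hlodef]; simp [hij]
              have hhii : hi i = Tb := by rw [hhidef]; simp [hij]
              rw [if_neg hij, hloi, hhii, Int.card_Icc,
                show Tb + 1 - -Tb = 2*Tb+1 by ring]
              have hcast : (((2*Tb+1).toNat : ℤ) : ℝ) ≤ 7*Q := by
                rw [Int.toNat_of_nonneg (by omega)]
                push_cast
                linarith
              exact_mod_cast hcast
      _ = Nr * (7*Q)^(Finset.univ.erase j).card := by
          rw [← Finset.mul_prod_erase Finset.univ _ (Finset.mem_univ j), if_pos rfl]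
          congr 1
          rw [Finset.prod_congr rfl (fun i hi => if_neg (Finset.ne_of_mem_erase hi))]
          exact Finset.prod_const _
      _ = (7*Q)^(n-1) * Nr := by
          rw [Finset.card_erase_of_mem (Finset.mem_univ j), Finset.card_univ,
            Fintype.card_fin]
          ring
  clear_value lo hi K
  -- master inequality
  have hmaster : (K.card : ℝ) * (6*ρ)^m < 1 := by
    have hb1 : (6*ρ)^m ≤ ((6*(c+2))*Nr^(-β₀))^m := by
      apply pow_le_pow_left₀ (by linarith)
      calc 6*ρ ≤ 6*((c+2)*Nr^(-β₀)) := by linarith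
        _ = (6*(c+2))*Nr^(-β₀) := by ring
    have hb2 : ((6*(c+2))*Nr^(-β₀))^m = (6*(c+2))^m * Nr^((-β₀)*(m:ℝ)) := by
      rw [mul_pow]
      congr 1
      rw [Real.rpow_mul (le_of_lt hNr0), Real.rpow_natCast]
    have hb3 : (7*Q)^(n-1) = 7^(n-1) * Nr^(α*((n:ℝ)-1)) := by
      rw [mul_pow]
      congr 1
      rw [hQdef, ← Real.rpow_natCast (Nr^α) (n-1), ← Real.rpow_mul (le_of_lt hNr0)]
      congr 1
      congr 1
      rw [Nat.cast_sub hn, Nat.cast_one]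
    calc (K.card : ℝ) * (6*ρ)^m
        ≤ ((7*Q)^(n-1) * Nr) * ((6*(c+2))*Nr^(-β₀))^m := by
          apply mul_le_mul hKcard hb1 (by positivity) (by positivity)
      _ = C * (Nr^(α*((n:ℝ)-1)) * Nr^(1:ℝ) * Nr^((-β₀)*(m:ℝ))) := by
          rw [hb2, hb3, Real.rpow_one, hCdef]; ring
      _ = C * Nr^e := by
          rw [← Real.rpow_add hNr0, ← Real.rpow_add hNr0]
          congr 1
          rw [hee]; ring
      _ < 1 := hx4
  -- choose the good γ
  obtain ⟨γ, hγ⟩ := exists_good_gamma m K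
    (fun r => A.mulVec (fun i => ((r i : ℤ) : ℝ))) ρ hρ0 hρhalf hmaster
  -- apply the inhomogeneous hypothesis
  obtain ⟨q, hqQ, p, hp⟩ := hQfar Q hx2 γ
  -- decompose q
  set k : ℤ := q j / Nz with hkdef
  set r : Fin n → ℤ := fun i => q i - k * q₁ i with hrdef
  have hdiv : Nz * k + q j % Nz = q j := Int.mul_ediv_add_emod (q j) Nz
  have hmod0 : 0 ≤ q j % Nz := Int.emod_nonneg _ (ne_of_gt hNz0)
  have hmodlt : q j % Nz < Nz := Int.emod_lt_of_pos _ hNz0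
  clear_value k
  have hrj : r j = q j % Nz := by
    have h' : r j = q j - k * q₁ j := by rw [hrdef]
    rw [h', ← hNzdef]
    linarith [hdiv]
  have hqcoord : ∀ i, |(q i : ℝ)| < Q := by
    intro i
    exact lt_of_le_of_lt (coord_abs_le_norm (fun i => ((q i : ℝ))) i) hqQ
  have hkabs : |(k : ℝ)| * Nr ≤ Q + Nr := by
    have h1 : Nz * k = q j - q j % Nz := by linarith [hdiv]
    have h2 : |Nz * k| ≤ |q j| + |q j % Nz| := by
      rw [h1, sub_eq_add_neg]
      exact le_trans (abs_add_le _ _) (by rw [abs_neg])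
    have h3 : |Nz * k| = Nz * |k| := by
      rw [abs_mul, abs_of_pos hNz0]
    have h4 : |q j % Nz| ≤ Nz := by
      rw [abs_of_nonneg hmod0]; omega
    have h5 : Nz * |k| ≤ |q j| + Nz := by omega
    have h6 : ((Nz * |k| : ℤ) : ℝ) ≤ ((|q j| + Nz : ℤ) : ℝ) := by exact_mod_cast h5
    push_cast at h6
    rw [hNrdef]
    linarith [hqcoord j, h6]
  -- membership of the residue in K
  have hq1coord : ∀ i, ((|q₁ i| : ℤ) : ℝ) ≤ Nr := by
    intro i
    rw [hNrdef]
    exact_mod_cast hjmax i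
  have hrK : r ∈ K := by
    rw [hKdef, Finset.mem_Icc]
    constructor <;> rw [Pi.le_def] <;> intro i
    · by_cases hij : i = j
      · subst hij
        have hloj : lo i = 0 := by rw [hlodef]; simp
        rw [hloj, hrj]
        exact hmod0
      · have hloi : lo i = -Tb := by rw [hlodef]; simp [hij]
        rw [hloi]
        have habs : |(r i : ℝ)| ≤ 3*Q := by
          have h1 : (r i : ℝ) = (q i : ℝ) - (k:ℝ) * (q₁ i : ℝ) := by
            rw [hrdef]; push_cast; ring
          rw [h1]
          calc |(q i : ℝ) - (k:ℝ) * (q₁ i : ℝ)|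
              ≤ |(q i : ℝ)| + |(k:ℝ) * (q₁ i : ℝ)| := by
                rw [sub_eq_add_neg]
                exact le_trans (abs_add_le _ _) (by rw [abs_neg])
            _ ≤ Q + |(k:ℝ)| * Nr := by
                have h2 : |(k:ℝ) * (q₁ i : ℝ)| ≤ |(k:ℝ)| * Nr := by
                  rw [abs_mul]
                  apply mul_le_mul_of_nonneg_left _ (abs_nonneg _)
                  rw [← Int.cast_abs]
                  exact hq1coord i
                linarith [hqcoord i]
            _ ≤ Q + (Q + Nr) := by linarith [hkabs]
            _ ≤ 3*Q := by linarith [hQN]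
        have hTbi : |r i| ≤ Tb := by
          rw [hTbdef]
          apply Int.le_floor.mpr
          rw [Int.cast_abs]
          exact habs
        exact (abs_le.mp hTbi).1
    · by_cases hij : i = j
      · subst hij
        have hhij : hi i = Nz - 1 := by rw [hhidef]; simp
        rw [hhij, hrj]
        omega
      · have hhii : hi i = Tb := by rw [hhidef]; simp [hij]
        rw [hhii]
        have habs : |(r i : ℝ)| ≤ 3*Q := by
          have h1 : (r i : ℝ) = (q i : ℝ) - (k:ℝ) * (q₁ i : ℝ) := by
            rw [hrdef]; push_cast; ring
          rw [h1]
          calc |(q i : ℝ) - (k:ℝ) * (q₁ i : ℝ)|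
              ≤ |(q i : ℝ)| + |(k:ℝ) * (q₁ i : ℝ)| := by
                rw [sub_eq_add_neg]
                exact le_trans (abs_add_le _ _) (by rw [abs_neg])
            _ ≤ Q + |(k:ℝ)| * Nr := by
                have h2 : |(k:ℝ) * (q₁ i : ℝ)| ≤ |(k:ℝ)| * Nr := by
                  rw [abs_mul]
                  apply mul_le_mul_of_nonneg_left _ (abs_nonneg _)
                  rw [← Int.cast_abs]
                  exact hq1coord i
                linarith [hqcoord i]
            _ ≤ Q + (Q + Nr) := by linarith [hkabs]
            _ ≤ 3*Q := by linarith [hQN]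
        have hTbi : |r i| ≤ Tb := by
          rw [hTbdef]
          apply Int.le_floor.mpr
          rw [Int.cast_abs]
          exact habs
        exact (abs_le.mp hTbi).2
  -- the final contradiction
  have hgood := hγ r hrK (fun i => p i + k * p₁ i)
  beta_reduce at hgood
  have hvec : (fun i => ((r i : ℤ) : ℝ)) =
      (fun i => ((q i : ℤ) : ℝ)) - (k:ℝ) • (fun i => ((q₁ i : ℤ) : ℝ)) := by
    funext i
    rw [hrdef]
    simp only [Pi.sub_apply, Pi.smul_apply, smul_eq_mul]
    push_cast
    ring
  clear_value r
  have hid : A.mulVec (fun i => ((r i : ℤ) : ℝ)) -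
        (fun i => ((p i + k * p₁ i : ℤ) : ℝ)) - γ =
      (A.mulVec (fun i => ((q i : ℤ) : ℝ)) - (fun i => ((p i : ℤ) : ℝ)) - γ) -
        (k:ℝ) • (A.mulVec (fun i => ((q₁ i : ℤ) : ℝ)) + (fun i => ((p₁ i : ℤ) : ℝ))) := by
    rw [hvec, Matrix.mulVec_sub, Matrix.mulVec_smul]
    funext i
    simp only [Pi.sub_apply, Pi.smul_apply, Pi.add_apply, smul_eq_mul]
    push_cast
    ring
  have hnormle : ‖A.mulVec (fun i => ((r i : ℤ) : ℝ)) -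
        (fun i => ((p i + k * p₁ i : ℤ) : ℝ)) - γ‖ ≤
      ‖A.mulVec (fun i => ((q i : ℤ) : ℝ)) - (fun i => ((p i : ℤ) : ℝ)) - γ‖ +
        |(k:ℝ)| * ‖A.mulVec (fun i => ((q₁ i : ℤ) : ℝ)) + (fun i => ((p₁ i : ℤ) : ℝ))‖ := by
    rw [hid]
    refine le_trans (norm_sub_le _ _) ?_
    rw [norm_smul, Real.norm_eq_abs]
  have hsmallk : |(k:ℝ)| * ‖A.mulVec (fun i => ((q₁ i : ℤ) : ℝ)) +
        (fun i => ((p₁ i : ℤ) : ℝ))‖ ≤ (Q+Nr)/Nr * Nr ^ (-σ) := by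
    have hk2 : |(k:ℝ)| ≤ (Q+Nr)/Nr := by
      rw [le_div_iff₀ hNr0]
      exact hkabs
    apply mul_le_mul hk2 hθbound (norm_nonneg _) (by positivity)
  have : ρ < ρ := by
    calc ρ < ‖A.mulVec (fun i => ((r i : ℤ) : ℝ)) -
          (fun i => ((p i + k * p₁ i : ℤ) : ℝ)) - γ‖ := hgood
      _ ≤ _ := hnormle
      _ < c * Q ^ (-(d-ε)) + (Q+Nr)/Nr * Nr ^ (-σ) := by
          have := hp
          linarith [hsmallk]
      _ = ρ := hρdef.symm
  exact lt_irrefl _ this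

/-- If for every `ε > 0` there exists `c > 0` such that for all sufficiently
large `Q` and all `γ ∈ ℝ^m` there exist `q ∈ ℤ^n` with `‖q‖ < Q` and `p ∈ ℤ^m` satisfying
`‖A q - p - γ‖ < c * Q ^ (-(n/m - ε))`, then `A` is not very well approximable. -/
theorem inhomogeneous_implies_not_VWA
    (m n : ℕ) (hm : 0 < m) (hn : 0 < n) (A : Matrix (Fin m) (Fin n) ℝ)
    (h : ∀ ε > (0 : ℝ), ∃ c > (0 : ℝ), ∃ Q₀ : ℝ, ∀ Q ≥ Q₀, ∀ γ : Fin m → ℝ,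
      ∃ q : Fin n → ℤ, ‖(fun i => (q i : ℝ))‖ < Q ∧
      ∃ p : Fin m → ℤ,
        ‖A.mulVec (fun i => (q i : ℝ)) - (fun i => (p i : ℝ)) - γ‖ <
          c * Q ^ (-((n : ℝ) / m - ε))) :
    ¬ ∃ σ : ℝ, σ > (n : ℝ) / m ∧
      {pq : (Fin m → ℤ) × (Fin n → ℤ) |
        ‖A.mulVec (fun i => (pq.2 i : ℝ)) + (fun i => (pq.1 i : ℝ))‖ ≤
          ‖(fun i => (pq.2 i : ℝ))‖ ^ (-σ)}.Infinite := by
  rintro ⟨σ, hσ, hinf⟩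
  have hm1 : (1:ℝ) ≤ m := by exact_mod_cast hm
  have hn1 : (1:ℝ) ≤ n := by exact_mod_cast hn
  have hm0 : (0:ℝ) < m := by linarith
  set d : ℝ := (n:ℝ)/m with hd
  clear_value d
  have hmd : (m:ℝ) * d = n := by rw [hd]; field_simp
  have hd0 : 0 < d := by rw [hd]; positivity
  have hσ0 : 0 < σ := lt_trans hd0 hσ
  set T : ℝ := min (σ - d) 1 with hT
  clear_value T
  have hT0 : 0 < T := by rw [hT]; exact lt_min (by linarith) one_pos
  have hT1 : T ≤ 1 := hT ▸ min_le_right _ _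
  have hTσ : d + T ≤ σ := by have := hT ▸ min_le_left (σ - d) 1; linarith
  have hmn0 : (0:ℝ) < m + n := by linarith
  set α : ℝ := 1 + (m:ℝ)*T/(2*((m:ℝ)+n)) with hα
  set ε : ℝ := T/(8*((m:ℝ)+n)) with hε
  clear_value α ε
  have hε0 : 0 < ε := by rw [hε]; positivity
  have hα1 : 1 ≤ α := by
    rw [hα]
    have : 0 ≤ (m:ℝ)*T/(2*((m:ℝ)+n)) := by positivity
    linarith
  have hα0 : 0 < α := by linarith
  have hεd : ε < d := by
    rw [hε, hd, div_lt_div_iff₀ (by positivity) hm0]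
    nlinarith [hT1, hn1, hm1, hT0]
  set β₀ : ℝ := min (α*(d-ε)) (σ+1-α) with hβ₀
  clear_value β₀
  have hβ₀l : β₀ ≤ α*(d-ε) := hβ₀ ▸ min_le_left _ _
  have hβ₀r : β₀ ≤ σ+1-α := hβ₀ ▸ min_le_right _ _
  have hαsub : α - 1 ≤ T/2 := by
    rw [hα, add_sub_cancel_left, div_le_div_iff₀ (by positivity) (by norm_num)]
    nlinarith [hn1, hT0]
  have hβ₀0 : 0 < β₀ := by
    rw [hβ₀]
    apply lt_min
    · have : 0 < d - ε := by linarith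
      positivity
    · linarith [hαsub, hTσ, hd0, hT0]
  have hE1 : α*((n:ℝ)-1) + 1 < (m:ℝ)*(α*(d-ε)) := by
    have hexp : (m:ℝ)*(α*(d-ε)) = α*(n:ℝ) - α*((m:ℝ)*ε) := by
      have h' : (m:ℝ)*(α*(d-ε)) = α*((m:ℝ)*d) - α*((m:ℝ)*ε) := by ring
      rw [h', hmd]
    rw [hexp]
    set u : ℝ := (m:ℝ)*T/((m:ℝ)+n) with hu
    clear_value u
    have hu0 : 0 < u := by rw [hu]; positivity
    have hu1 : u ≤ 1 := by
      rw [hu, div_le_one hmn0]; nlinarith [hT1, hn1]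
    have hαu : α = 1 + u/2 := by rw [hα, hu]; field_simp
    have hmeu : (m:ℝ)*ε = u/8 := by rw [hε, hu]; field_simp
    have key : 1 - α + α*((m:ℝ)*ε) < 0 := by
      rw [hαu, hmeu]
      nlinarith [mul_le_of_le_one_right (le_of_lt hu0) hu1]
    have hexpand : α*((n:ℝ)-1) = α*(n:ℝ) - α := by ring
    linarith [key]
  have hE2 : α*((n:ℝ)-1) + 1 < (m:ℝ)*(σ+1-α) := by
    have h1 : (m:ℝ)*(σ+1-α) ≥ (m:ℝ)*(d + T + 1 - α) := by
      apply mul_le_mul_of_nonneg_left _ (le_of_lt hm0)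
      linarith
    have h2 : (m:ℝ)*(d + T + 1 - α) = (n:ℝ) + (m:ℝ)*T - (m:ℝ)*(α-1) := by
      have h' : (m:ℝ)*(d + T + 1 - α) = (m:ℝ)*d + (m:ℝ)*T - (m:ℝ)*(α-1) := by ring
      rw [h', hmd]
    have h3 : (m:ℝ)*(α-1) = (m:ℝ)*((m:ℝ)*T)/(2*((m:ℝ)+n)) := by rw [hα]; ring
    have h4 : (m:ℝ)*((m:ℝ)*T)/(2*((m:ℝ)+n)) ≤ (m:ℝ)*T/2 := by
      rw [div_le_div_iff₀ (by positivity) (by norm_num)]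
      nlinarith [mul_nonneg (mul_nonneg hm0.le hT0.le) (by linarith : (0:ℝ) ≤ n)]
    have h5 : α*((n:ℝ)-1) = ((n:ℝ)-1) + ((n:ℝ)-1)*((m:ℝ)*T)/(2*((m:ℝ)+n)) := by
      rw [hα]; ring
    have h6 : ((n:ℝ)-1)*((m:ℝ)*T)/(2*((m:ℝ)+n)) < (m:ℝ)*T/2 := by
      rw [div_lt_div_iff₀ (by positivity) (by norm_num)]
      nlinarith [mul_pos (mul_pos hm0 hT0) (show (0:ℝ) < (m:ℝ)+1 by linarith)]
    linarith
  obtain ⟨e, hee⟩ : ∃ e : ℝ, e = α*((n:ℝ)-1) + 1 - (m:ℝ)*β₀ := ⟨_, rfl⟩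
  have he0 : e < 0 := by
    rcases min_choice (α*(d-ε)) (σ+1-α) with hmin | hmin
    · rw [hee, hβ₀, hmin]; linarith
    · rw [hee, hβ₀, hmin]; linarith
  obtain ⟨c, hc, Q₀, hQfar⟩ := h ε hε0
  exact vwa_part2 m n hm hn A σ d α ε β₀ e c Q₀ hσ0 hc hα1 hβ₀0 hβ₀l hβ₀r hee he0 hQfar hinf
end

section
/- Let m, n be positive integers and A an m×n real matrix such that the transpose Aᵀ is σ-very well approximable for some σ > m/n (i.e., there are infinitely many pairs (p, q) ∈ ℤ^n × ℤ^m with ‖Aᵀq + p‖ ≤ ‖q‖^{−σ}). Set μ = (m/n + σ)/2. Then for every c > 0, the set D_{c,μ} of all γ ∈ ℝ^m such that there exist arbitrarily large Q with the property that for every q ∈ ℤ^n with ‖q‖ < Q and every p ∈ ℤ^m one has ‖Aq − p − γ‖ > c·Q^{−1/μ}, has Hausdorff dimension m. -/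
/-!
Take the solutions `(p'ₖ, yₖ)` of `‖Aᵀ y + p'‖ ≤ ‖y‖^{-σ}` with `‖yₖ‖ → ∞`. If `yₖ · γ` lies at
distance at least `1/4` from `ℤ`, then for `‖q‖ < Q = ‖yₖ‖^σ / (8n)` the transference identity
`yₖ · (A q - p - γ) = (Aᵀ yₖ + p'ₖ) · q - (p'ₖ · q + yₖ · p) - yₖ · γ` forces
`‖A q - p - γ‖ ≥ 1 / (8 m ‖yₖ‖)`, which beats `c Q^{-1/μ}` for large `k` because `μ < σ`.
Each slab set meets the ball of radius `2` in at least half the volume of the unit ball, since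
the translation by a `v` with `yₖ · v = 1/2` moves its complement into it. So the limsup of the
slab sets has positive Lebesgue measure, hence full Hausdorff dimension.
-/

open Matrix Set MeasureTheory Filter Topology Metric
open scoped Matrix.Norms.Operator

section PiNorm

variable {ι : Type*} [Fintype ι]

theorem norm_intCast_pi (q : ι → ℤ) : ‖(fun i => (q i : ℝ))‖ = ‖q‖ := rfl

theorem one_le_norm_intVec_of_ne_zero {q : ι → ℤ} (hq : q ≠ 0) : 1 ≤ ‖q‖ := by
  obtain ⟨i, hi⟩ := Function.ne_iff.mp hq
  calc (1 : ℝ) ≤ ‖q i‖ := by rw [Int.norm_eq_abs]; exact_mod_cast Int.one_le_abs hi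
    _ ≤ ‖q‖ := norm_le_pi_norm q i

theorem norm_intVec_rpow_neg_le_one (q : ι → ℤ) {σ : ℝ} (hσ : 0 < σ) : ‖q‖ ^ (-σ) ≤ 1 := by
  rcases eq_or_ne q 0 with rfl | hq
  · rw [norm_zero, Real.zero_rpow (neg_ne_zero.mpr hσ.ne')]
    exact zero_le_one
  · exact Real.rpow_le_one_of_one_le_of_nonpos (one_le_norm_intVec_of_ne_zero hq)
      (neg_nonpos.mpr hσ.le)

theorem abs_dotProduct_le (v w : ι → ℝ) : |v ⬝ᵥ w| ≤ Fintype.card ι * ‖v‖ * ‖w‖ :=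
  calc |v ⬝ᵥ w| ≤ ∑ i, |v i * w i| := Finset.abs_sum_le_sum_abs _ _
    _ ≤ ∑ _i : ι, ‖v‖ * ‖w‖ := by
        gcongr with i
        rw [abs_mul]
        exact mul_le_mul (norm_le_pi_norm v i) (norm_le_pi_norm w i) (abs_nonneg _)
          (norm_nonneg _)
    _ = Fintype.card ι * ‖v‖ * ‖w‖ := by simp [mul_assoc]

end PiNorm

theorem le_measure_limsup_atTop {α : Type*} [MeasurableSpace α] {μ : Measure α}
    {s : ℕ → Set α} (hs : ∀ k, NullMeasurableSet (s k) μ) (hfin : μ (⋃ k, s k) ≠ ⊤)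
    {a : ENNReal} (ha : ∀ᶠ k in atTop, a ≤ μ (s k)) : a ≤ μ (limsup s atTop) := by
  rw [limsup_eq_iInf_iSup_of_nat]
  have hanti : Antitone fun K => ⋃ k ≥ K, s k :=
    fun K L hKL => iSup₂_mono' fun k hk => ⟨k, hKL.trans hk, le_rfl⟩
  have hfin0 : μ (⋃ k ≥ 0, s k) ≠ ⊤ :=
    ne_top_of_le_ne_top hfin (measure_mono (iSup₂_le fun k _ => subset_iUnion s k))
  refine ge_of_tendsto (tendsto_measure_iInter_atTop
    (fun K => .iUnion fun k => .iUnion fun _ => hs k) hanti ⟨0, hfin0⟩) ?_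
  filter_upwards [ha] with K hK
  exact hK.trans (measure_mono (le_iSup₂ (f := fun k (_ : k ≥ K) => s k) K le_rfl))

theorem dimH_of_volume_ne_zero {ι : Type*} [Fintype ι] {s : Set (ι → ℝ)} (hs : volume s ≠ 0) :
    dimH s = Fintype.card ι := by
  refine le_antisymm ((dimH_mono (subset_univ s)).trans_eq (Real.dimH_univ_pi ι)) ?_
  simpa using le_dimH_of_hausdorffMeasure_ne_zero (d := Fintype.card ι) (s := s)
    (by rwa [NNReal.coe_natCast, hausdorffMeasure_pi_real])

theorem eventually_lt_rpow_div_and_mul_rpow_lt_one {σ μ a : ℝ} (hμ : 0 < μ) (hμσ : μ < σ)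
    (ha : 0 < a) (b Q₀ : ℝ) :
    ∀ᶠ N : ℝ in atTop, Q₀ < N ^ σ / a ∧ b * N * (N ^ σ / a) ^ (-1 / μ) < 1 := by
  have hgrowth : Tendsto (fun N : ℝ => N ^ σ / a) atTop atTop :=
    (tendsto_rpow_atTop (hμ.trans hμσ)).atTop_div_const ha
  have hdecay : Tendsto (fun N : ℝ => b * a ^ (1 / μ) * N ^ (-(σ / μ - 1))) atTop (𝓝 0) := by
    simpa only [mul_zero] using (tendsto_rpow_neg_atTop
      (by rw [sub_pos, one_lt_div hμ]; exact hμσ)).const_mul (b * a ^ (1 / μ))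
  have heq : (fun N : ℝ => b * a ^ (1 / μ) * N ^ (-(σ / μ - 1))) =ᶠ[atTop]
      fun N => b * N * (N ^ σ / a) ^ (-1 / μ) := by
    filter_upwards [eventually_gt_atTop 0] with N hN
    rw [Real.div_rpow (Real.rpow_nonneg hN.le σ) ha.le, ← Real.rpow_mul hN.le,
      show -(σ / μ - 1) = σ * (-1 / μ) + 1 by ring, Real.rpow_add_one hN.ne',
      show -1 / μ = -(1 / μ) by ring, Real.rpow_neg ha.le]
    field_simp
  exact (hgrowth.eventually_gt_atTop Q₀).and ((hdecay.congr' heq).eventually (gt_mem_nhds one_pos))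

theorem exists_seq_tendsto_norm_snd {m n : ℕ} (A : Matrix (Fin m) (Fin n) ℝ)
    {S : Set ((Fin n → ℤ) × (Fin m → ℤ))} (hS : S.Infinite)
    (hS_bdd : ∀ pq ∈ S, ‖Aᵀ *ᵥ (fun i => (pq.2 i : ℝ)) + (fun i => (pq.1 i : ℝ))‖ ≤ 1) :
    ∃ f : ℕ → (Fin n → ℤ) × (Fin m → ℤ), (∀ k, f k ∈ S) ∧
      Tendsto (fun k => ‖(f k).2‖) atTop atTop := by
  have hlarge (T : ℝ) : ∃ pq ∈ S, T ≤ ‖pq.2‖ := by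
    by_contra! hsmall
    refine hS (((isCompact_closedBall (0 : Fin n → ℤ) (1 + ‖Aᵀ‖ * T)).prod
      (isCompact_closedBall (0 : Fin m → ℤ) T)).finite_of_discrete.subset fun pq hpq => ?_)
    have hq : ‖pq.2‖ ≤ T := (hsmall pq hpq).le
    refine ⟨?_, mem_closedBall_zero_iff.mpr hq⟩
    rw [mem_closedBall_zero_iff, ← norm_intCast_pi]
    calc _ ≤ ‖Aᵀ *ᵥ (fun i => (pq.2 i : ℝ)) + (fun i => (pq.1 i : ℝ))‖ +
          ‖Aᵀ *ᵥ (fun i => (pq.2 i : ℝ))‖ := norm_le_add_norm_add' _ _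
      _ ≤ 1 + ‖Aᵀ‖ * T := by
        gcongr
        · exact hS_bdd pq hpq
        · exact (linfty_opNorm_mulVec _ _).trans (by rw [norm_intCast_pi]; gcongr)
  choose f hfS hf using fun k : ℕ => hlarge k
  exact ⟨f, hfS, tendsto_atTop_mono hf tendsto_natCast_atTop_atTop⟩

section Slabs

variable {ι : Type*} [Fintype ι]

def farFromIntSlabs (y : ι → ℝ) : Set (ι → ℝ) := {γ | ∀ j : ℤ, 1 / 4 ≤ |y ⬝ᵥ γ - j|}

theorem isClosed_farFromIntSlabs (y : ι → ℝ) : IsClosed (farFromIntSlabs y) := by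
  simp only [farFromIntSlabs, ofPred_forall]
  exact isClosed_iInter fun j => isClosed_le continuous_const (by fun_prop)

theorem mem_or_add_mem_farFromIntSlabs {y v : ι → ℝ} (hv : y ⬝ᵥ v = 1 / 2) (γ : ι → ℝ) :
    γ ∈ farFromIntSlabs y ∨ γ + v ∈ farFromIntSlabs y := by
  by_contra! h
  simp only [farFromIntSlabs, mem_ofPred_eq, not_forall, not_le, dotProduct_add, hv] at h
  obtain ⟨⟨j, hj⟩, ⟨k, hk⟩⟩ := h
  rw [abs_lt] at hj hk
  have h0 : (0 : ℝ) < ((k - j : ℤ) : ℝ) := by push_cast; linarith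
  have h1 : ((k - j : ℤ) : ℝ) < 1 := by push_cast; linarith
  norm_cast at h0 h1
  omega

theorem volume_closedBall_le_two_mul_volume_farFromIntSlabs {y v : ι → ℝ}
    (hv : y ⬝ᵥ v = 1 / 2) (r : ℝ) :
    volume (closedBall (0 : ι → ℝ) r) ≤
      2 * volume (farFromIntSlabs y ∩ closedBall 0 (r + ‖v‖)) := by
  set T := farFromIntSlabs y ∩ closedBall 0 (r + ‖v‖)
  have hcover : closedBall 0 r ⊆ T ∪ (· + v) ⁻¹' T := by
    intro γ hγ
    rw [mem_closedBall_zero_iff] at hγ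
    refine (mem_or_add_mem_farFromIntSlabs hv γ).imp (fun h => ⟨h, ?_⟩) (fun h => ⟨h, ?_⟩)
    · rw [mem_closedBall_zero_iff]; linarith [norm_nonneg v]
    · rw [mem_closedBall_zero_iff]; linarith [norm_add_le γ v]
  calc volume (closedBall (0 : ι → ℝ) r) ≤ volume T + volume ((· + v) ⁻¹' T) :=
        (measure_mono hcover).trans (measure_union_le _ _)
    _ = 2 * volume T := by rw [measure_preimage_add_right, two_mul]

theorem exists_dotProduct_intCast_eq_half {y : ι → ℤ} (hy : y ≠ 0) :
    ∃ v : ι → ℝ, (fun i => (y i : ℝ)) ⬝ᵥ v = 1 / 2 ∧ ‖v‖ ≤ 1 / 2 := by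
  classical
  obtain ⟨i, hi⟩ := Function.ne_iff.mp hy
  have hyi : (1 : ℝ) ≤ |(y i : ℝ)| := by exact_mod_cast Int.one_le_abs hi
  refine ⟨Pi.single i (1 / (2 * y i)), ?_, ?_⟩
  · rw [dotProduct_single]
    field_simp [show (y i : ℝ) ≠ 0 by exact_mod_cast hi]
  · rw [Pi.norm_single, Real.norm_eq_abs, abs_div, abs_one, abs_mul, abs_two]
    exact one_div_le_one_div_of_le two_pos (by linarith)

theorem volume_closedBall_div_two_le_volume_farFromIntSlabs_intCast {y : ι → ℤ} (hy : y ≠ 0) :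
    volume (closedBall (0 : ι → ℝ) 1) / 2 ≤
      volume (farFromIntSlabs (fun i => (y i : ℝ)) ∩ closedBall 0 2) := by
  obtain ⟨v, hv, hv_le⟩ := exists_dotProduct_intCast_eq_half hy
  refine ENNReal.div_le_of_le_mul'
    ((volume_closedBall_le_two_mul_volume_farFromIntSlabs hv 1).trans ?_)
  gcongr
  linarith

end Slabs

theorem dotProduct_mulVec_sub_eq {ι κ : Type*} [Fintype ι] [Fintype κ] (A : Matrix ι κ ℝ)
    (y : ι → ℤ) (p' q : κ → ℤ) (p : ι → ℤ) (γ : ι → ℝ) :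
    (fun i => (y i : ℝ)) ⬝ᵥ (A *ᵥ (fun i => (q i : ℝ)) - (fun i => (p i : ℝ)) - γ) =
      (Aᵀ *ᵥ (fun i => (y i : ℝ)) + (fun i => (p' i : ℝ))) ⬝ᵥ (fun i => (q i : ℝ)) -
        ((p' ⬝ᵥ q + y ⬝ᵥ p : ℤ) : ℝ) - (fun i => (y i : ℝ)) ⬝ᵥ γ := by
  rw [dotProduct_sub, dotProduct_sub, dotProduct_mulVec, add_dotProduct, ← mulVec_transpose]
  simp only [dotProduct, Int.cast_add, Int.cast_sum, Int.cast_mul]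
  ring

theorem le_abs_dotProduct_of_mem_farFromIntSlabs {ι κ : Type*} [Fintype ι] [Fintype κ]
    (A : Matrix ι κ ℝ) {y : ι → ℤ} {p' q : κ → ℤ} (p : ι → ℤ) {γ : ι → ℝ}
    (hγ : γ ∈ farFromIntSlabs (fun i => (y i : ℝ)))
    (hq : |(Aᵀ *ᵥ (fun i => (y i : ℝ)) + (fun i => (p' i : ℝ))) ⬝ᵥ (fun i => (q i : ℝ))| ≤ 1 / 8) :
    1 / 8 ≤ |(fun i => (y i : ℝ)) ⬝ᵥ (A *ᵥ (fun i => (q i : ℝ)) - (fun i => (p i : ℝ)) - γ)| := by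
  rw [dotProduct_mulVec_sub_eq A y p' q p γ]
  set ε := (Aᵀ *ᵥ (fun i => (y i : ℝ)) + (fun i => (p' i : ℝ))) ⬝ᵥ (fun i => (q i : ℝ))
  set J : ℤ := p' ⬝ᵥ q + y ⬝ᵥ p
  have hfar : 1 / 4 ≤ |(fun i => (y i : ℝ)) ⬝ᵥ γ + J| := by
    simpa only [Int.cast_neg, sub_neg_eq_add] using hγ (-J)
  have htri : |(fun i => (y i : ℝ)) ⬝ᵥ γ + J| ≤ |ε| + |ε - J - (fun i => (y i : ℝ)) ⬝ᵥ γ| :=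
    calc _ = |ε - (ε - J - (fun i => (y i : ℝ)) ⬝ᵥ γ)| := by ring_nf
      _ ≤ _ := abs_sub _ _
  linarith

theorem one_le_mul_norm_sub_of_mem_farFromIntSlabs {m n : ℕ} (hn : 0 < n)
    (A : Matrix (Fin m) (Fin n) ℝ) {σ : ℝ} {y : Fin m → ℤ} {p' q : Fin n → ℤ} (p : Fin m → ℤ)
    {γ : Fin m → ℝ} (hy : 0 < ‖y‖)
    (happrox : ‖Aᵀ *ᵥ (fun i => (y i : ℝ)) + (fun i => (p' i : ℝ))‖ ≤ ‖y‖ ^ (-σ))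
    (hγ : γ ∈ farFromIntSlabs (fun i => (y i : ℝ))) (hq : ‖q‖ < ‖y‖ ^ σ / (8 * n)) :
    1 ≤ 8 * m * ‖y‖ * ‖A *ᵥ (fun i => (q i : ℝ)) - (fun i => (p i : ℝ)) - γ‖ := by
  have hε : |(Aᵀ *ᵥ (fun i => (y i : ℝ)) + (fun i => (p' i : ℝ))) ⬝ᵥ (fun i => (q i : ℝ))|
      ≤ 1 / 8 :=
    calc _ ≤ n * ‖Aᵀ *ᵥ (fun i => (y i : ℝ)) + (fun i => (p' i : ℝ))‖ * ‖q‖ :=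
          (abs_dotProduct_le _ _).trans_eq (by rw [Fintype.card_fin, norm_intCast_pi])
      _ ≤ n * ‖y‖ ^ (-σ) * (‖y‖ ^ σ / (8 * n)) := by gcongr
      _ = 1 / 8 := by
          rw [Real.rpow_neg hy.le]
          field_simp
  have hdot := abs_dotProduct_le (fun i => (y i : ℝ))
    (A *ᵥ (fun i => (q i : ℝ)) - (fun i => (p i : ℝ)) - γ)
  rw [Fintype.card_fin, norm_intCast_pi] at hdot
  linarith [le_abs_dotProduct_of_mem_farFromIntSlabs A p hγ hε]

/-- The set `D_{c,μ}` of the statement. -/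
def badTargets {m n : ℕ} (A : Matrix (Fin m) (Fin n) ℝ) (c μ : ℝ) : Set (Fin m → ℝ) :=
  {γ | ∀ Q₀ : ℝ, ∃ Q > Q₀, ∀ q : Fin n → ℤ, ‖(fun i => (q i : ℝ))‖ < Q →
    ∀ p : Fin m → ℤ, ‖A *ᵥ (fun i => (q i : ℝ)) - (fun i => (p i : ℝ)) - γ‖ > c * Q ^ (-1 / μ)}

theorem mem_badTargets_of_frequently_mem_farFromIntSlabs {m n : ℕ} (hn : 0 < n)
    (A : Matrix (Fin m) (Fin n) ℝ) {σ μ : ℝ} (hμ : 0 < μ) (hμσ : μ < σ) (c : ℝ)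
    {f : ℕ → (Fin n → ℤ) × (Fin m → ℤ)}
    (happrox : ∀ k, ‖Aᵀ *ᵥ (fun i => ((f k).2 i : ℝ)) + (fun i => ((f k).1 i : ℝ))‖ ≤
      ‖(f k).2‖ ^ (-σ))
    (hf : Tendsto (fun k => ‖(f k).2‖) atTop atTop) {γ : Fin m → ℝ}
    (hγ : ∃ᶠ k in atTop, γ ∈ farFromIntSlabs (fun i => ((f k).2 i : ℝ))) :
    γ ∈ badTargets A c μ := by
  intro Q₀
  obtain ⟨k, hγk, hy, hQ₀, hsmall⟩ := (hγ.and_eventually (hf.eventually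
    ((eventually_gt_atTop 0).and (eventually_lt_rpow_div_and_mul_rpow_lt_one hμ hμσ
      (a := 8 * n) (by positivity) (8 * m * c) Q₀)))).exists
  refine ⟨_, hQ₀, fun q hq p => ?_⟩
  have hfar := one_le_mul_norm_sub_of_mem_farFromIntSlabs hn A p hy (happrox k) hγk hq
  refine lt_of_mul_lt_mul_left (a := 8 * m * ‖(f k).2‖) ?_ (by positivity)
  linarith

theorem winning_set_full_dimension_general
    (m n : ℕ) (hn : 0 < n) (A : Matrix (Fin m) (Fin n) ℝ)
    (σ : ℝ) (hσ : σ > (m : ℝ) / n)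
    (hA : {pq : (Fin n → ℤ) × (Fin m → ℤ) |
      ‖Aᵀ.mulVec (fun i => (pq.2 i : ℝ)) + (fun i => (pq.1 i : ℝ))‖ ≤
        ‖(fun i => (pq.2 i : ℝ))‖ ^ (-σ)}.Infinite)
    (μ : ℝ) (hμ : μ = ((m : ℝ) / n + σ) / 2) (c : ℝ) :
    dimH {γ : Fin m → ℝ | ∀ Q₀ : ℝ, ∃ Q > Q₀,
      ∀ q : Fin n → ℤ, ‖(fun i => (q i : ℝ))‖ < Q →
      ∀ p : Fin m → ℤ,
        ‖A.mulVec (fun i => (q i : ℝ)) - (fun i => (p i : ℝ)) - γ‖ >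
          c * Q ^ (-1 / μ)} = m := by
  have hmn : 0 ≤ (m : ℝ) / n := by positivity
  have hμ0 : 0 < μ := by rw [hμ]; linarith
  have hμσ : μ < σ := by rw [hμ]; linarith
  obtain ⟨f, happrox, hf⟩ := exists_seq_tendsto_norm_snd A hA fun pq hpq =>
    hpq.trans (norm_intVec_rpow_neg_le_one pq.2 (hmn.trans_lt hσ))
  set s : ℕ → Set (Fin m → ℝ) :=
    fun k => farFromIntSlabs (fun i => ((f k).2 i : ℝ)) ∩ closedBall 0 2
  have hlimsup : volume (closedBall (0 : Fin m → ℝ) 1) / 2 ≤ volume (limsup s atTop) :=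
    le_measure_limsup_atTop
      (fun k => ((isClosed_farFromIntSlabs _).inter isClosed_closedBall).nullMeasurableSet)
      ((measure_mono (iUnion_subset fun k => inter_subset_right)).trans_lt
        measure_closedBall_lt_top).ne
      ((hf.eventually (eventually_gt_atTop 0)).mono fun k hk =>
        volume_closedBall_div_two_le_volume_farFromIntSlabs_intCast (norm_pos_iff.mp hk))
  have hsub : limsup s atTop ⊆ badTargets A c μ := fun γ hγ =>
    mem_badTargets_of_frequently_mem_farFromIntSlabs hn A hμ0 hμσ c happrox hf
      ((mem_limsup_iff_frequently_mem.mp hγ).mono fun k hk => hk.1)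
  have hpos : 0 < volume (closedBall (0 : Fin m → ℝ) 1) / 2 :=
    ENNReal.div_pos (measure_closedBall_pos _ _ one_pos).ne' ENNReal.ofNat_ne_top
  have hdim := dimH_of_volume_ne_zero (hpos.trans_le (hlimsup.trans (measure_mono hsub))).ne'
  rwa [Fintype.card_fin] at hdim

/-- If the transpose of `A` is `σ`-very well approximable for some
`σ > m/n`, and `μ = (m/n + σ)/2`, then for every `c > 0` the set `D_{c,μ}` of `γ ∈ ℝ^m`
admitting arbitrarily large `Q` such that `‖A q - p - γ‖ > c * Q ^ (-1/μ)` for all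
`q ∈ ℤ^n` with `‖q‖ < Q` and all `p ∈ ℤ^m`, has Hausdorff dimension `m`. -/
theorem winning_set_full_dimension
    (m n : ℕ) (hm : 0 < m) (hn : 0 < n) (A : Matrix (Fin m) (Fin n) ℝ)
    (σ : ℝ) (hσ : σ > (m : ℝ) / n)
    (hA : {pq : (Fin n → ℤ) × (Fin m → ℤ) |
      ‖Aᵀ.mulVec (fun i => (pq.2 i : ℝ)) + (fun i => (pq.1 i : ℝ))‖ ≤
        ‖(fun i => (pq.2 i : ℝ))‖ ^ (-σ)}.Infinite)
    (μ : ℝ) (hμ : μ = ((m : ℝ) / n + σ) / 2) (c : ℝ) (hc : 0 < c) :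
    dimH {γ : Fin m → ℝ | ∀ Q₀ : ℝ, ∃ Q > Q₀,
      ∀ q : Fin n → ℤ, ‖(fun i => (q i : ℝ))‖ < Q →
      ∀ p : Fin m → ℤ,
        ‖A.mulVec (fun i => (q i : ℝ)) - (fun i => (p i : ℝ)) - γ‖ >
          c * Q ^ (-1 / μ)} = m :=
  winning_set_full_dimension_general m n hn A σ hσ hA μ hμ c
end

section
/- Let ω be a nonzero real number, and let θ, γ ∈ ℝ be such that θ/ω is irrational and there exist no integers a, b with γ/ω = a·(θ/ω) + b. Then there exist infinitely many q ∈ ℤ such that min_{p ∈ ℤ} |γ − qθ + pω| < |ω|/(4|q|). -/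
/-!
Rescaling reduces to `ω = 1`, with `ξ = θ / ω` and `x = γ / ω`. Take a rational `p₀ / q₀` in lowest
terms with `|ξ - p₀ / q₀| < 1 / q₀²` and `q₀` large, and write the integer `s` nearest to `q₀ x` as
`Q p₀ - P q₀` with `0 ≤ Q < q₀`. For such a pair, and for `(Q - q₀, P - p₀)`,
`q₀ (x - Q ξ + P) = η - t E` with `η = q₀ x - s`, `E = q₀² (ξ - p₀ / q₀)` and `t = Q / q₀`, so that
`|Q| |x - Q ξ + P| = |t| |t E - η|`. Since `0 < |E| < 1` and `|η| ≤ 1 / 2`, an elementary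
inequality makes this `< 1 / 4` for `t = Q / q₀` or `t = Q / q₀ - 1`. The `x - Q ξ + P` obtained
is less than `2 / q₀`, so for large `q₀` its `Q` avoids any given finite set of `q`, none of which
has `x - q ξ` an integer.
-/

open Finset

lemma exists_pos_le_abs_sub_intCast {ι : Type*} (s : Finset ι) (f : ι → ℝ)
    (hf : ∀ i ∈ s, ∀ n : ℤ, f i ≠ n) : ∃ c > 0, ∀ i ∈ s, ∀ n : ℤ, c ≤ |f i - n| := by
  classical
  induction s using Finset.induction_on with
  | empty => exact ⟨1, one_pos, by simp⟩
  | insert i s _ ih =>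
    obtain ⟨c, hc, hcs⟩ := ih fun j hj => hf j (mem_insert_of_mem hj)
    have hi : 0 < |f i - round (f i)| :=
      abs_pos.mpr (sub_ne_zero.mpr (hf i (mem_insert_self i s) _))
    refine ⟨min c |f i - round (f i)|, lt_min hc hi, ?_⟩
    simp only [mem_insert, forall_eq_or_imp]
    exact ⟨fun n => (min_le_right _ _).trans (round_le _ n),
      fun j hj n => (min_le_left _ _).trans (hcs j hj n)⟩

lemma Irrational.exists_rat_lt_den_abs_sub_lt_one_div_den_sq {ξ : ℝ} (hξ : Irrational ξ)
    (N : ℕ) : ∃ r : ℚ, N < r.den ∧ |ξ - r| < 1 / (r.den : ℝ) ^ 2 := by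
  obtain ⟨c, hc, hgap⟩ := exists_pos_le_abs_sub_intCast (Icc 1 N) (fun d : ℕ => d * ξ)
    fun d hd n => by
      simpa using (hξ.natCast_mul (by have := (mem_Icc.mp hd).1; omega)).ne_int n
  have hcN : 0 < c / (N + 1) := by positivity
  obtain ⟨r₀, hr₀, hr₀ξ⟩ := exists_rat_btwn (sub_lt_self ξ hcN)
  obtain ⟨r, hr, hrr₀⟩ := Real.exists_rat_abs_sub_lt_and_lt_of_irrational hξ r₀
  refine ⟨r, not_le.mp fun hle => ?_, hr⟩
  have hden : (0 : ℝ) < r.den := by positivity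
  have hdist : |(r.den : ℝ) * ξ - r.num| = r.den * |ξ - r| := by
    rw [← abs_of_pos hden, ← abs_mul, abs_of_pos hden, Rat.cast_def]
    field_simp
  have hleN : (r.den : ℝ) ≤ N := by exact_mod_cast hle
  have hr₀' : |ξ - r| * (N + 1) < c := by
    rw [← lt_div_iff₀ (by positivity)]
    exact hrr₀.trans (by rw [abs_of_pos] <;> linarith)
  have hgap_den := hgap r.den (mem_Icc.mpr ⟨r.den_pos, hle⟩) r.num
  rw [hdist] at hgap_den
  nlinarith [abs_nonneg (ξ - r)]

lemma IsCoprime.exists_mul_sub_mul_eq {p q : ℤ} (h : IsCoprime p q) (hq : 0 < q) (s : ℤ) :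
    ∃ Q P : ℤ, 0 ≤ Q ∧ Q < q ∧ Q * p - P * q = s := by
  obtain ⟨u, v, huv⟩ := h
  refine ⟨s * u % q, -(s * v + s * u / q * p), Int.emod_nonneg _ hq.ne',
    Int.emod_lt_of_pos _ hq, ?_⟩
  linear_combination p * Int.emod_def (s * u) q + s * huv

lemma abs_mul_abs_sub_lt_quarter_of_pos {a e η : ℝ} (ha₀ : 0 ≤ a) (ha₁ : a ≤ 1) (he₀ : 0 < e)
    (he₁ : e < 1) (hη₀ : 0 ≤ η) (hη₁ : η ≤ 1 / 2) :
    |a| * |a * e - η| < 1 / 4 ∨ |a - 1| * |(a - 1) * e - η| < 1 / 4 := by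
  have hneg : (a - 1) * e - η ≤ 0 := by nlinarith
  rw [abs_of_nonneg ha₀, abs_of_nonpos (by linarith : a - 1 ≤ 0), abs_of_nonpos hneg]
  by_contra! h
  obtain ⟨h₁, h₂⟩ := h
  rcases le_total η (a * e) with hc | hc
  · -- `(1 - a) h₁ + a h₂` reads `a (1 - a) e ≥ 1 / 4`, but `a (1 - a) ≤ 1 / 4` and `e < 1`.
    rw [abs_of_nonneg (by linarith)] at h₁
    nlinarith [sq_nonneg (2 * a - 1), mul_nonneg ha₀ (sub_nonneg.mpr ha₁)]
  · -- Here `a² e ≤ (2 a - 1) / 4 ≤ (1 - a)² e`, so `a ≤ 1 / 2`, and then `h₁` fails.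
    rw [abs_of_nonpos (by linarith)] at h₁
    have haη : a * η ≤ a / 2 := by nlinarith
    have hbη : (1 - a) * η ≤ (1 - a) / 2 := by nlinarith
    have ha : a ≤ 1 / 2 := by nlinarith
    have haη' : a * η ≤ 1 / 4 := by nlinarith
    have ha0 : a = 0 := by nlinarith [mul_pos (mul_pos he₀ he₀) he₀, sq_nonneg a]
    subst ha0
    norm_num at h₁

lemma abs_mul_abs_sub_lt_quarter {a e η : ℝ} (ha₀ : 0 ≤ a) (ha₁ : a ≤ 1) (he₀ : e ≠ 0)
    (he₁ : |e| < 1) (hη : |η| ≤ 1 / 2) :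
    |a| * |a * e - η| < 1 / 4 ∨ |a - 1| * |(a - 1) * e - η| < 1 / 4 := by
  wlog hη₀ : 0 ≤ η generalizing e η with H
  · have := H (e := -e) (η := -η) (neg_ne_zero.mpr he₀) (by rwa [abs_neg])
      (by rwa [abs_neg]) (by linarith)
    rwa [show a * -e - -η = -(a * e - η) by ring,
      show (a - 1) * -e - -η = -((a - 1) * e - η) by ring, abs_neg, abs_neg] at this
  wlog he : 0 < e generalizing a e with H
  · have := H (a := 1 - a) (e := -e) (by linarith) (by linarith) (neg_ne_zero.mpr he₀)
      (by rwa [abs_neg]) (by linarith [lt_of_le_of_ne (not_lt.mp he) he₀])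
    rwa [show (1 - a) * -e - η = (a - 1) * e - η by ring,
      show (1 - a - 1) * -e - η = a * e - η by ring, show 1 - a - 1 = -a by ring, abs_neg,
      abs_sub_comm, or_comm] at this
  exact abs_mul_abs_sub_lt_quarter_of_pos ha₀ ha₁ he (abs_lt.mp he₁).2 hη₀ (abs_le.mp hη).2

lemma exists_abs_mul_abs_sub_lt_quarter (x : ℝ) {ξ : ℝ} {r : ℚ} (hξr : ξ ≠ r)
    (hr : |ξ - r| < 1 / (r.den : ℝ) ^ 2) :
    ∃ Q P : ℤ, |(Q : ℝ)| * |x - Q * ξ + P| < 1 / 4 ∧ |x - Q * ξ + P| < 2 / r.den := by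
  have hden : (0 : ℝ) < r.den := by positivity
  set E : ℝ := r.den ^ 2 * (ξ - r) with hE
  have hE₀ : E ≠ 0 := mul_ne_zero (by positivity) (sub_ne_zero.mpr hξr)
  have hE₁ : |E| < 1 := by
    rw [abs_mul, abs_of_pos (by positivity), ← lt_div_iff₀' (by positivity)]
    simpa using hr
  set s : ℤ := round (r.den * x)
  set η : ℝ := r.den * x - s
  have hη : |η| ≤ 1 / 2 := abs_sub_round _
  have hsol : ∀ Q P : ℤ, Q * r.num - P * r.den = s →
      r.den * (x - Q * ξ + P) = η - (Q / r.den) * E := by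
    intro Q P h
    have h' : (Q : ℝ) * r.num - P * r.den = s := by exact_mod_cast h
    rw [hE, Rat.cast_def]
    field_simp
    linear_combination -h'
  have hcand : ∀ Q P : ℤ, Q * r.num - P * r.den = s → |(Q : ℝ) / r.den| ≤ 1 →
      |(Q : ℝ) / r.den| * |(Q / r.den) * E - η| < 1 / 4 →
      ∃ Q P : ℤ, |(Q : ℝ)| * |x - Q * ξ + P| < 1 / 4 ∧ |x - Q * ξ + P| < 2 / r.den := by
    intro Q P h ht hquarter
    have hd : |x - Q * ξ + P| = |(Q / r.den) * E - η| / r.den := by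
      rw [eq_div_iff hden.ne', abs_sub_comm, ← hsol Q P h, abs_mul, abs_of_pos hden, mul_comm]
    refine ⟨Q, P, ?_, ?_⟩
    · calc |(Q : ℝ)| * |x - Q * ξ + P| = |(Q : ℝ) / r.den| * |(Q / r.den) * E - η| := by
            rw [hd, abs_div, abs_of_pos hden]; ring
        _ < 1 / 4 := hquarter
    · rw [hd, div_lt_div_iff_of_pos_right hden]
      calc |(Q / r.den) * E - η| ≤ |(Q : ℝ) / r.den| * |E| + |η| := by
            rw [← abs_mul]; exact abs_sub _ _
        _ < 2 := by nlinarith [abs_nonneg E]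
  obtain ⟨Q, P, hQ₀, hQ₁, hQP⟩ :=
    r.isCoprime_num_den.exists_mul_sub_mul_eq (by exact_mod_cast r.den_pos) s
  have ha₀ : (0 : ℝ) ≤ Q / r.den := by positivity
  have ha₁ : (Q : ℝ) / r.den ≤ 1 := by
    rw [div_le_one hden]; exact_mod_cast hQ₁.le
  rcases abs_mul_abs_sub_lt_quarter ha₀ ha₁ hE₀ hE₁ hη with h | h
  · exact hcand Q P hQP (by rwa [abs_of_nonneg ha₀]) h
  · have hshift : ((Q - r.den : ℤ) : ℝ) / r.den = Q / r.den - 1 := by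
      push_cast; field_simp
    refine hcand (Q - r.den) (P - r.num) (by linear_combination hQP) ?_ (by rwa [hshift])
    rw [hshift, abs_of_nonpos (by linarith)]; linarith

theorem infinite_setOf_abs_sub_mul_add_lt_quarter {ξ x : ℝ} (hξ : Irrational ξ)
    (hx : ¬ ∃ a b : ℤ, x = a * ξ + b) :
    {q : ℤ | ∃ p : ℤ, |x - q * ξ + p| < 1 / (4 * |(q : ℝ)|)}.Infinite := by
  intro hfin
  obtain ⟨c, hc, hgap⟩ := exists_pos_le_abs_sub_intCast (insert 0 hfin.toFinset)
    (fun q : ℤ => x - q * ξ) fun q _ n h => hx ⟨q, n, by linarith⟩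
  obtain ⟨N, hN⟩ := exists_nat_gt (2 / c)
  obtain ⟨r, hrN, hr⟩ := hξ.exists_rat_lt_den_abs_sub_lt_one_div_den_sq N
  obtain ⟨Q, P, hquarter, hsmall⟩ := exists_abs_mul_abs_sub_lt_quarter x (hξ.ne_rat r) hr
  have hc' : 2 / (r.den : ℝ) < c := by
    rw [div_lt_comm₀ (by positivity) hc]
    exact hN.trans (by exact_mod_cast hrN)
  have hQ : Q ∉ insert 0 hfin.toFinset := fun hQ =>
    (hgap Q hQ (-P)).not_gt (by simpa [sub_neg_eq_add] using hsmall.trans hc')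
  rw [mem_insert, not_or, Set.Finite.mem_toFinset] at hQ
  refine hQ.2 ⟨P, ?_⟩
  rw [lt_div_iff₀ (by simpa [abs_pos] using hQ.1)]
  linarith

/-- (Minkowski-type theorem, rescaled by `ω`.) Let `ω ≠ 0`, and let
`θ, γ ∈ ℝ` with `θ/ω` irrational and such that `γ/ω = a (θ/ω) + b` has no integer
solutions `a, b`. Then there are infinitely many `q ∈ ℤ` such that
`min_{p ∈ ℤ} |γ - q θ + p ω| < |ω| / (4 |q|)`. -/
theorem minkowski_inhomogeneous_rescaled
    (ω θ γ : ℝ) (hω : ω ≠ 0) (hirr : Irrational (θ / ω))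
    (hno : ¬ ∃ a b : ℤ, γ / ω = (a : ℝ) * (θ / ω) + (b : ℝ)) :
    {q : ℤ | ∃ p : ℤ,
      |γ - (q : ℝ) * θ + (p : ℝ) * ω| < |ω| / (4 * |(q : ℝ)|)}.Infinite := by
  refine (infinite_setOf_abs_sub_mul_add_lt_quarter hirr hno).mono ?_
  rintro q ⟨p, hp⟩
  refine ⟨p, ?_⟩
  have hscale : γ - q * θ + p * ω = ω * (γ / ω - q * (θ / ω) + p) := by field_simp
  rw [hscale, abs_mul, div_eq_mul_one_div |ω|]
  exact mul_lt_mul_of_pos_left hp (abs_pos.mpr hω)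
end
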